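/- arXiv:1510.02315 — 7 statements merged into one kernel-verified Lean document; each statement's English description precedes it below -/
import Mathlib

section
/- Let K ⊆ ℝ^d be a nonempty compact set and let x₁, y₁, x₂, y₂ ∈ ℝ^d; set ε₁ := |x₁ − x₂| and ε₂ := |y₁ − y₂|. Then |1_K(y₁ − x₁) − 1_K(y₂ − x₂)| ≤ 1_{∂^{2 max(ε₁,ε₂)} K}(y₁ − x₁) ≤ 1_{∂^{2ε₁} K}(y₁ − x₁) + 1_{∂^{2ε₂} K}(y₁ − x₁), where 1_A denotes the indicator function of a set A. -/
open MeasureTheory Metric Set Pointwise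

lemma aux_preconnected_frontier {X : Type*} [TopologicalSpace X] {s t : Set X}
    (hs : IsPreconnected s) (h1 : (s ∩ t).Nonempty) (h2 : (s \ t).Nonempty) :
    (s ∩ frontier t).Nonempty := by
  by_contra h
  rw [Set.not_nonempty_iff_eq_empty] at h
  have hsub : s ⊆ interior t ∪ interior tᶜ := by
    intro x hx
    have hxf : x ∉ frontier t := fun hf => absurd (Set.mem_inter hx hf) (by simp [h])
    rw [← compl_frontier_eq_union_interior]; exact hxf
  obtain ⟨p, hp⟩ := h1
  obtain ⟨q, hq⟩ := h2
  have hp' : p ∈ s ∩ interior t := by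
    refine ⟨hp.1, ?_⟩
    have : p ∉ frontier t := fun hf => absurd (Set.mem_inter hp.1 hf) (by simp [h])
    rcases hsub hp.1 with h' | h'
    · exact h'
    · exact absurd (interior_subset h') (by simpa using hp.2)
  have hq' : q ∈ s ∩ interior tᶜ := by
    refine ⟨hq.1, ?_⟩
    rcases hsub hq.1 with h' | h'
    · exact absurd (interior_subset h') hq.2
    · exact h'
  obtain ⟨z, hzs, hz1, hz2⟩ := hs (interior t) (interior tᶜ) isOpen_interior isOpen_interior
    hsub ⟨p, hp'⟩ ⟨q, hq'⟩
  exact absurd (interior_subset hz2) (by simpa using interior_subset hz1)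

lemma frontier_near {d : ℕ} {K : Set (EuclideanSpace ℝ (Fin d))}
    (a b : EuclideanSpace ℝ (Fin d)) (hab : (a ∈ K) ≠ (b ∈ K)) :
    ∃ f ∈ frontier K, dist a f ≤ dist a b := by
  have hconn : IsPreconnected (segment ℝ a b) := (convex_segment a b).isPreconnected
  have h1 : ((segment ℝ a b) ∩ K).Nonempty ∧ ((segment ℝ a b) \ K).Nonempty := by
    by_cases haK : a ∈ K
    · have hbK : b ∉ K := by simp [haK] at hab; exact hab
      exact ⟨⟨a, left_mem_segment ℝ a b, haK⟩, ⟨b, right_mem_segment ℝ a b, hbK⟩⟩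
    · have hbK : b ∈ K := by simp [haK] at hab; exact hab
      exact ⟨⟨b, right_mem_segment ℝ a b, hbK⟩, ⟨a, left_mem_segment ℝ a b, haK⟩⟩
  obtain ⟨f, hfs, hff⟩ := aux_preconnected_frontier hconn h1.1 h1.2
  refine ⟨f, hff, ?_⟩
  have := dist_add_dist_of_mem_segment hfs
  linarith [dist_nonneg (x := f) (y := b)]

/-- For a nonempty compact set `K ⊆ ℝ^d` and points
`x₁, y₁, x₂, y₂ ∈ ℝ^d`, with `ε₁ = |x₁ - x₂|`, `ε₂ = |y₁ - y₂|`,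
`|1_K(y₁ - x₁) - 1_K(y₂ - x₂)| ≤ 1_{∂^{2 max(ε₁,ε₂)} K}(y₁ - x₁)
  ≤ 1_{∂^{2ε₁} K}(y₁ - x₁) + 1_{∂^{2ε₂} K}(y₁ - x₁)`,
where `∂^ε K := ∂K + closedBall(0,ε)` (which for `ε = 0` is just `∂K`). -/
theorem stmt1 {d : ℕ} (K : Set (EuclideanSpace ℝ (Fin d)))
    (hKne : K.Nonempty) (hKcp : IsCompact K)
    (x₁ y₁ x₂ y₂ : EuclideanSpace ℝ (Fin d)) :
    |Set.indicator K (fun _ => (1:ℝ)) (y₁ - x₁) -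
        Set.indicator K (fun _ => (1:ℝ)) (y₂ - x₂)| ≤
      Set.indicator (frontier K + closedBall 0 (2 * max ‖x₁ - x₂‖ ‖y₁ - y₂‖))
        (fun _ => (1:ℝ)) (y₁ - x₁) ∧
    Set.indicator (frontier K + closedBall 0 (2 * max ‖x₁ - x₂‖ ‖y₁ - y₂‖))
        (fun _ => (1:ℝ)) (y₁ - x₁) ≤
      Set.indicator (frontier K + closedBall 0 (2 * ‖x₁ - x₂‖)) (fun _ => (1:ℝ)) (y₁ - x₁) +
      Set.indicator (frontier K + closedBall 0 (2 * ‖y₁ - y₂‖)) (fun _ => (1:ℝ)) (y₁ - x₁) := by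
  constructor
  · by_cases hsame : ((y₁ - x₁) ∈ K) = ((y₂ - x₂) ∈ K)
    · have h0 : Set.indicator K (fun _ => (1:ℝ)) (y₁ - x₁) =
          Set.indicator K (fun _ => (1:ℝ)) (y₂ - x₂) := by
        by_cases h : (y₁ - x₁) ∈ K
        · rw [Set.indicator_of_mem h, Set.indicator_of_mem (hsame ▸ h)]
        · rw [Set.indicator_of_notMem h, Set.indicator_of_notMem (fun hc => h (hsame ▸ hc))]
      rw [h0, sub_self, abs_zero]
      exact Set.indicator_nonneg (fun _ _ => zero_le_one) _
    · obtain ⟨f, hf, hdist⟩ := frontier_near (y₁ - x₁) (y₂ - x₂) (by exact hsame)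
      have hmem : (y₁ - x₁) ∈ frontier K + closedBall 0 (2 * max ‖x₁ - x₂‖ ‖y₁ - y₂‖) := by
        rw [Set.mem_add]
        refine ⟨f, hf, (y₁ - x₁) - f, ?_, by abel⟩
        rw [mem_closedBall, dist_zero_right]
        have h1 : ‖(y₁ - x₁) - (y₂ - x₂)‖ ≤ ‖y₁ - y₂‖ + ‖x₁ - x₂‖ := by
          have : (y₁ - x₁) - (y₂ - x₂) = (y₁ - y₂) - (x₁ - x₂) := by abel
          rw [this]; exact norm_sub_le _ _
        have h2 : dist (y₁ - x₁) f ≤ ‖y₁ - y₂‖ + ‖x₁ - x₂‖ := by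
          calc dist (y₁ - x₁) f ≤ dist (y₁ - x₁) (y₂ - x₂) := hdist
            _ = ‖(y₁ - x₁) - (y₂ - x₂)‖ := dist_eq_norm _ _
            _ ≤ _ := h1
        rw [← dist_eq_norm] at *
        have := le_max_left ‖x₁ - x₂‖ ‖y₁ - y₂‖
        have := le_max_right ‖x₁ - x₂‖ ‖y₁ - y₂‖
        calc dist (y₁ - x₁) f ≤ ‖y₁ - y₂‖ + ‖x₁ - x₂‖ := h2
          _ ≤ 2 * max ‖x₁ - x₂‖ ‖y₁ - y₂‖ := by
            rw [dist_eq_norm] at *; linarith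
      rw [Set.indicator_of_mem hmem]
      have hle : |Set.indicator K (fun _ => (1:ℝ)) (y₁ - x₁) -
          Set.indicator K (fun _ => (1:ℝ)) (y₂ - x₂)| ≤ 1 := by
        by_cases h1 : (y₁ - x₁) ∈ K <;> by_cases h2 : (y₂ - x₂) ∈ K <;>
          simp [h1, h2]
      exact hle
  · rcases le_total ‖x₁ - x₂‖ ‖y₁ - y₂‖ with h | h
    · rw [max_eq_right h]
      exact le_add_of_nonneg_left (Set.indicator_nonneg (fun _ _ => zero_le_one) _)
    · rw [max_eq_left h]
      exact le_add_of_nonneg_right (Set.indicator_nonneg (fun _ _ => zero_le_one) _)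
end

section
/- Let K and Θ be set-valued maps on ℝ^d such that each Θ(v) ⊆ ℝ^d is closed, ∂K(v) ⊆ Θ(v) for all v, and there is a constant C > 0 with K(v) Δ K(w) ⊆ Θ(v)^{C|v−w|,+} for all v, w ∈ ℝ^d (Δ denotes symmetric difference). Then for every v ∈ ℝ^d the generalized boundary satisfies ∂̃K(v) ⊆ Θ(v), where ∂̃K(v) := { x ∈ ℝ^d : (v,x) ∈ ∂K̃ } and K̃ := { (v,x) ∈ ℝ^d × ℝ^d : x ∈ K(v) }. -/
open MeasureTheory Metric Set Pointwise

/-!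
Near a point `(v, x)` of `∂K̃` with `x` in the interior of `K(v)`, there are points `(w, y)` with
`y ∈ K(v) \ K(w)`, so `y` lies within `C‖v - w‖` of `Θ(v)`. This condition is closed in `(w, y)`,
so it passes to the limit `(v, x)`, which puts `x` in the closure of `Θ(v)`. The exterior case is
the same argument for the complements `K(·)ᶜ`, which have the same symmetric differences, and the
remaining case is `x ∈ ∂K(v) ⊆ Θ(v)`.
-/

theorem add_closedBall_zero_subset_cthickening {E : Type*} [SeminormedAddCommGroup E]
    (s : Set E) (r : ℝ) : s + closedBall (0 : E) r ⊆ cthickening r s := by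
  rintro _ ⟨z, hz, b, hb, rfl⟩
  refine mem_cthickening_of_dist_le _ z r s hz ?_
  simpa [dist_eq_norm] using hb

theorem isClosed_setOf_mem_cthickening_mul_dist {V E : Type*} [PseudoMetricSpace V]
    [PseudoEMetricSpace E] (Θ : Set E) (C : ℝ) (v : V) :
    IsClosed {p : V × E | p.2 ∈ cthickening (C * dist v p.1) Θ} := by
  simp only [mem_cthickening_iff]
  exact isClosed_le (continuous_infEDist.comp continuous_snd)
    (ENNReal.continuous_ofReal.comp (continuous_const.mul (continuous_const.dist continuous_fst)))

section Graph

variable {V E : Type*} [PseudoMetricSpace V] [PseudoEMetricSpace E]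
  {K : V → Set E} {Θ : Set E} {C : ℝ} {v : V} {x : E}

theorem mem_closure_of_mem_interior_of_mem_closure_compl_graph
    (hK : ∀ w, K v \ K w ⊆ cthickening (C * dist v w) Θ) (hx : x ∈ interior (K v))
    (hvx : (v, x) ∈ closure {p : V × E | p.2 ∉ K p.1}) : x ∈ closure Θ := by
  have hnear : (v, x) ∈ closure ({p : V × E | p.2 ∉ K p.1} ∩ univ ×ˢ interior (K v)) :=
    (isOpen_univ.prod isOpen_interior).closure_inter ⟨hvx, mem_univ v, hx⟩
  have hsub : {p : V × E | p.2 ∉ K p.1} ∩ univ ×ˢ interior (K v) ⊆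
      {p : V × E | p.2 ∈ cthickening (C * dist v p.1) Θ} :=
    fun p ⟨hpK, _, hpv⟩ => hK p.1 ⟨interior_subset hpv, hpK⟩
  have hlim := closure_minimal hsub (isClosed_setOf_mem_cthickening_mul_dist Θ C v) hnear
  simpa only [mem_ofPred_eq, dist_self, mul_zero, cthickening_zero] using hlim

theorem mem_closure_of_mem_frontier_graph (hbd : frontier (K v) ⊆ Θ)
    (hsym : ∀ w, symmDiff (K v) (K w) ⊆ cthickening (C * dist v w) Θ)
    (hvx : (v, x) ∈ frontier {p : V × E | p.2 ∈ K p.1}) : x ∈ closure Θ := by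
  rw [frontier_eq_closure_inter_closure] at hvx
  obtain ⟨hK, hKc⟩ := hvx
  by_cases hint : x ∈ interior (K v)
  · exact mem_closure_of_mem_interior_of_mem_closure_compl_graph
      (fun w => (subset_union_left).trans (hsym w)) hint hKc
  by_cases hext : x ∈ interior (K v)ᶜ
  · refine mem_closure_of_mem_interior_of_mem_closure_compl_graph (K := fun w => (K w)ᶜ) (C := C)
      (fun w => ?_) hext (by simpa using hK)
    rw [compl_sdiff_compl]
    exact (subset_union_right).trans (hsym w)
  rw [interior_compl, notMem_compl_iff] at hext
  exact subset_closure (hbd ⟨hext, hint⟩)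

end Graph

theorem stmt2_general {d : ℕ}
    (K Θ : EuclideanSpace ℝ (Fin d) → Set (EuclideanSpace ℝ (Fin d)))
    (hΘcl : ∀ v, IsClosed (Θ v))
    (hbd : ∀ v, frontier (K v) ⊆ Θ v)
    (C : ℝ)
    (hsym : ∀ v w, symmDiff (K v) (K w) ⊆
      Θ v + closedBall (0 : EuclideanSpace ℝ (Fin d)) (C * ‖v - w‖)) :
    ∀ v : EuclideanSpace ℝ (Fin d),
      {x : EuclideanSpace ℝ (Fin d) |
        (v, x) ∈ frontier {p : EuclideanSpace ℝ (Fin d) × EuclideanSpace ℝ (Fin d) |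
          p.2 ∈ K p.1}} ⊆ Θ v := by
  intro v x hvx
  rw [← (hΘcl v).closure_eq]
  refine mem_closure_of_mem_frontier_graph (C := C) (hbd v) (fun w => ?_) hvx
  rw [dist_eq_norm]
  exact (hsym v w).trans (add_closedBall_zero_subset_cthickening _ _)

/-- Let `K` and `Θ` be set-valued maps on `ℝ^d` with each `Θ(v)` closed,
`∂K(v) ⊆ Θ(v)` for all `v`, and a constant `C > 0` with
`K(v) Δ K(w) ⊆ Θ(v)^{C|v-w|,+}` for all `v, w`. Then for every `v` the generalized
boundary `∂̃K(v) := { x : (v,x) ∈ ∂K̃ }`, where `K̃ := { (v,x) : x ∈ K(v) }`,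
satisfies `∂̃K(v) ⊆ Θ(v)`. -/
theorem stmt2 {d : ℕ}
    (K Θ : EuclideanSpace ℝ (Fin d) → Set (EuclideanSpace ℝ (Fin d)))
    (hΘcl : ∀ v, IsClosed (Θ v))
    (hbd : ∀ v, frontier (K v) ⊆ Θ v)
    (C : ℝ) (hC : 0 < C)
    (hsym : ∀ v w, symmDiff (K v) (K w) ⊆
      Θ v + closedBall (0 : EuclideanSpace ℝ (Fin d)) (C * ‖v - w‖)) :
    ∀ v : EuclideanSpace ℝ (Fin d),
      {x : EuclideanSpace ℝ (Fin d) |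
        (v, x) ∈ frontier {p : EuclideanSpace ℝ (Fin d) × EuclideanSpace ℝ (Fin d) |
          p.2 ∈ K p.1}} ⊆ Θ v :=
  stmt2_general K Θ hΘcl hbd C hsym
end

section
/- Assume the set-valued map K satisfies (H1) and (H2). Then for every N ∈ ℕ, every choice of weights m_i > 0 with Σ_{i=1}^N m_i = 1, and every initial datum (X_i⁰, V_i⁰)_{i=1}^N in (ℝ^d × ℝ^d)^N, there exist locally absolutely continuous curves X_i, V_i : [0,∞) → ℝ^d with X_i(0) = X_i⁰, V_i(0) = V_i⁰, such that for almost every t ≥ 0: X_i'(t) = V_i(t) and V_i'(t) ∈ { Σ_{j≠i} α_{ij} m_j (V_j(t) − V_i(t)) : α_{ij} ∈ 𝒜(X_i(t) − X_j(t), V_i(t)) } for every i; i.e. the N-particle differential inclusion has a global-in-time solution. -/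
open MeasureTheory Metric Set Filter Pointwise
noncomputable section

abbrev E (d : ℕ) : Type := EuclideanSpace ℝ (Fin d)

def admissibleSlopes {d : ℕ} (K : E d → Set (E d)) (x v : E d) : Set ℝ :=
  convexHull ℝ {α : ℝ | α ∈ Set.Icc (0:ℝ) 1 ∧
    ∃ z : ℕ → E d × E d, Tendsto z atTop (nhds (x, v)) ∧
      Tendsto (fun n => Set.indicator (K (z n).2) (fun _ => (1:ℝ)) (z n).1) atTop (nhds α)}

/-!
Euler polygons for the discontinuous field `v_i' = ∑_{j ≠ i} 1_{K(v_i)}(x_i - x_j) m_j (v_j - v_i)`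
replace each velocity by a convex combination of the current velocities, so velocities stay in
the ball of radius `‖V⁰‖` and the polygons are uniformly Lipschitz. By Tychonoff, along an
ultrafilter finer than `τ → 0⁺` they converge pointwise to a Lipschitz curve `u`.

The admissible slopes are the convex hull of the cluster values of the indicator at `(x, v)`,
a compact interval. Hence near `u t` every linear functional of the field is at most its maximum
over the Filippov set `{∑_j α_ij m_j (v_j - v_i) : α_ij ∈ 𝒜}` plus `δ`. Passing to the limit in
the integrated Euler scheme transfers these bounds to the one-sided difference quotients of `u`,
so wherever `u` is differentiable (almost everywhere, by Rademacher) Hahn–Banach separation puts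
`u'(t)` in the closed convex Filippov set. A Lipschitz curve is the integral of its derivative,
which gives the equations in integral form.
-/

open Topology
open scoped NNReal

theorem mapClusterPt_iff_exists_seq_tendsto {X Y : Type*} [TopologicalSpace Y]
    [FirstCountableTopology Y] {l : Filter X} [l.IsCountablyGenerated] {u : X → Y} {y : Y} :
    MapClusterPt y l u ↔ ∃ z : ℕ → X, Tendsto z atTop l ∧ Tendsto (u ∘ z) atTop (𝓝 y) :=
  ⟨fun h => let ⟨z, hu, hz⟩ := h.exists_seq_tendsto; ⟨z, hz, hu⟩,
    fun ⟨_, hz, hu⟩ => hu.mapClusterPt.of_comp hz⟩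

theorem convexHull_eq_Icc_of_isCompact {s : Set ℝ} (hs : IsCompact s) (hne : s.Nonempty) :
    convexHull ℝ s = Icc (sInf s) (sSup s) := by
  refine (convexHull_min (fun a ha => mem_Icc.2 ⟨csInf_le hs.bddBelow ha,
    le_csSup hs.bddAbove ha⟩) (convex_Icc _ _)).antisymm ?_
  rw [← segment_eq_Icc (csInf_le_csSup hne hs.bddBelow hs.bddAbove)]
  exact (convex_convexHull ℝ s).segment_subset (subset_convexHull ℝ s (hs.sInf_mem hne))
    (subset_convexHull ℝ s (hs.sSup_mem hne))

theorem exists_ultrafilter_tendsto_pi {ι T Y : Type*} [TopologicalSpace Y] {l : Filter ι}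
    [l.NeBot] {f : ι → T → Y} {K : T → Set Y} (hK : ∀ t, IsCompact (K t))
    (hf : ∀ᶠ i in l, ∀ t, f i t ∈ K t) :
    ∃ U : Ultrafilter ι, ↑U ≤ l ∧ ∃ u : T → Y, ∀ t, Tendsto (f · t) U (𝓝 (u t)) := by
  obtain ⟨u, -, hu⟩ := (isCompact_univ_pi hK).exists_mapClusterPt (u := f) (f := l)
    (le_principal_iff.2 (hf.mono fun i hi t _ => hi t))
  obtain ⟨U, hUl, hU⟩ := mapClusterPt_iff_ultrafilter.1 hu
  exact ⟨U, hUl, u, tendsto_pi_nhds.1 hU⟩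

section Calculus

variable {V : Type*} [NormedAddCommGroup V] [NormedSpace ℝ V]

theorem Convex.mem_of_forall_exists_dual_le {S : Set V} (hconv : Convex ℝ S)
    (hclosed : IsClosed S) {y : V}
    (h : ∀ (f : StrongDual ℝ V) (δ : ℝ), 0 < δ → ∃ s ∈ S, f y ≤ f s + δ) : y ∈ S := by
  by_contra hy
  obtain ⟨f, u, hS, hu⟩ := geometric_hahn_banach_closed_point hconv hclosed hy
  obtain ⟨s, hs, hfs⟩ := h f (f y - u) (sub_pos.2 hu)
  linarith [hS s hs]

theorem HasDerivAt.le_of_eventually_sub_le {g : ℝ → ℝ} {g' t M : ℝ} (hg : HasDerivAt g g' t)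
    (h : ∀ᶠ s in 𝓝[>] t, g s - g t ≤ (s - t) * M) : g' ≤ M := by
  refine le_of_tendsto ((hasDerivWithinAt_iff_tendsto_slope' self_notMem_Ioi).1
    hg.hasDerivWithinAt) ?_
  filter_upwards [h, self_mem_nhdsWithin] with s hs (hts : t < s)
  rw [slope_def_field, div_le_iff₀ (sub_pos.2 hts)]
  linarith

theorem Convex.mem_of_hasDerivAt_of_eventually_le {S : Set V} (hconv : Convex ℝ S)
    (hclosed : IsClosed S) {w : ℝ → V} {y : V} {t : ℝ} (hw : HasDerivAt w y t)
    (h : ∀ (f : StrongDual ℝ V) (δ : ℝ), 0 < δ →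
      ∃ s ∈ S, ∀ᶠ r in 𝓝[>] t, f (w r - w t) ≤ (r - t) * (f s + δ)) : y ∈ S :=
  hconv.mem_of_forall_exists_dual_le hclosed fun f δ hδ =>
    let ⟨s, hs, hev⟩ := h f δ hδ
    ⟨s, hs, (f.hasFDerivAt.comp_hasDerivAt t hw).le_of_eventually_sub_le
      (by simpa only [Function.comp_apply, map_sub] using hev)⟩

theorem LipschitzWith.intervalIntegrable_deriv [CompleteSpace V] {C : ℝ≥0} {f : ℝ → V}
    (hf : LipschitzWith C f) (a b : ℝ) : IntervalIntegrable (deriv f) volume a b :=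
  (intervalIntegrable_const (c := (C : ℝ))).mono_fun'
    (stronglyMeasurable_deriv f).aestronglyMeasurable
    (ae_of_all _ fun _ => norm_deriv_le_of_lipschitz hf)

theorem LipschitzWith.eq_add_integral_deriv [CompleteSpace V] [FiniteDimensional ℝ V]
    {C : ℝ≥0} {f : ℝ → V} (hf : LipschitzWith C f) (a b : ℝ) :
    f b = f a + ∫ s in a..b, deriv f s := by
  have hint := hf.intervalIntegrable_deriv
  have hI : LipschitzWith C fun x => ∫ s in a..x, deriv f s := by
    refine LipschitzWith.of_dist_le_mul fun x y => ?_
    rw [dist_eq_norm, intervalIntegral.integral_interval_sub_left (hint a x) (hint a y),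
      Real.dist_eq]
    exact intervalIntegral.norm_integral_le_of_norm_le_const fun _ _ =>
      norm_deriv_le_of_lipschitz hf
  have hderiv : ∀ᵐ x, x ∈ uIcc a b →
      HasDerivAt (fun x => f x - ∫ s in a..x, deriv f s) 0 x := by
    filter_upwards [hf.ae_differentiableAt_real, (hint a b).ae_hasDerivAt_integral]
      with x hfx hIx hx
    have := hfx.hasDerivAt.sub (hIx hx a left_mem_uIcc)
    rwa [sub_self] at this
  obtain ⟨c, hc⟩ := ((hf.sub hI).lipschitzOnWith.absolutelyContinuousOnInterval
    ).const_of_ae_hasDerivAt_zero hderiv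
  have ha := hc a left_mem_uIcc
  have hb := hc b right_mem_uIcc
  simp only [intervalIntegral.integral_same, sub_zero] at ha
  rw [ha, ← hb, sub_add_cancel]

end Calculus

section Euler

variable {V : Type*} [NormedAddCommGroup V] [NormedSpace ℝ V]

def eulerGrid (F : V → V) (p₀ : V) (τ : ℝ) : ℕ → V
  | 0 => p₀
  | k + 1 => eulerGrid F p₀ τ k + τ • F (eulerGrid F p₀ τ k)

-- `⌊s / τ⌋₊ = 0` for `s < 0`: the curve is only meaningful for `t ≥ 0`.
def eulerCurve (F : V → V) (p₀ : V) (τ t : ℝ) : V :=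
  p₀ + ∫ s in 0..t, F (eulerGrid F p₀ τ ⌊s / τ⌋₊)

variable {F : V → V} {p₀ : V} {τ : ℝ} {L : ℝ≥0}

theorem eulerCurve_zero : eulerCurve F p₀ τ 0 = p₀ := by
  simp [eulerCurve]

section Bounded

variable (hF : ∀ k, ‖F (eulerGrid F p₀ τ k)‖ ≤ L)
include hF

theorem intervalIntegrable_eulerGrid_floor (a b : ℝ) :
    IntervalIntegrable (fun s => F (eulerGrid F p₀ τ ⌊s / τ⌋₊)) volume a b :=
  (intervalIntegrable_const (c := (L : ℝ))).mono_fun'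
    ((StronglyMeasurable.of_discrete (f := fun k => F (eulerGrid F p₀ τ k))).comp_measurable
      (Nat.measurable_floor.comp (measurable_id.div_const τ))).aestronglyMeasurable
    (ae_of_all _ fun _ => hF _)

theorem eulerCurve_sub_eulerCurve (a b : ℝ) :
    eulerCurve F p₀ τ b - eulerCurve F p₀ τ a = ∫ s in a..b, F (eulerGrid F p₀ τ ⌊s / τ⌋₊) := by
  rw [eulerCurve, eulerCurve, add_sub_add_left_eq_sub,
    intervalIntegral.integral_interval_sub_left (intervalIntegrable_eulerGrid_floor hF 0 b)
      (intervalIntegrable_eulerGrid_floor hF 0 a)]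

theorem lipschitzWith_eulerCurve : LipschitzWith L (eulerCurve F p₀ τ) :=
  LipschitzWith.of_dist_le_mul fun a b => by
    rw [dist_eq_norm, eulerCurve_sub_eulerCurve hF, Real.dist_eq]
    exact intervalIntegral.norm_integral_le_of_norm_le_const fun _ _ => hF _

theorem eulerCurve_natCast_mul [CompleteSpace V] (hτ : 0 < τ) (k : ℕ) :
    eulerCurve F p₀ τ (k * τ) = eulerGrid F p₀ τ k := by
  induction k with
  | zero => simp [eulerCurve_zero, eulerGrid]
  | succ k ih =>
    have hfloor : ∀ᵐ s, s ∈ uIoc (k * τ) ((k + 1 : ℕ) * τ) →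
        F (eulerGrid F p₀ τ ⌊s / τ⌋₊) = F (eulerGrid F p₀ τ k) := by
      filter_upwards [volume.ae_ne ((k + 1 : ℕ) * τ)] with s hne hs
      rw [uIoc_of_le (by gcongr; omega)] at hs
      have hs₀ : 0 ≤ s / τ := div_nonneg ((by positivity : (0 : ℝ) ≤ k * τ).trans hs.1.le) hτ.le
      rw [(Nat.floor_eq_iff hs₀).2]
      rw [le_div_iff₀ hτ, div_lt_iff₀ hτ]
      push_cast at hs hne ⊢
      exact ⟨hs.1.le, lt_of_le_of_ne hs.2 hne⟩
    have hstep : ∫ s in k * τ..(k + 1 : ℕ) * τ, F (eulerGrid F p₀ τ ⌊s / τ⌋₊)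
        = τ • F (eulerGrid F p₀ τ k) := by
      rw [intervalIntegral.integral_congr_ae hfloor, intervalIntegral.integral_const]
      push_cast
      ring_nf
    rw [← sub_add_cancel (eulerCurve F p₀ τ _) (eulerCurve F p₀ τ (k * τ)),
      eulerCurve_sub_eulerCurve hF, hstep, ih, eulerGrid, add_comm]

theorem dist_eulerGrid_floor_eulerCurve_le [CompleteSpace V] (hτ : 0 < τ) {r t : ℝ}
    (hr : 0 ≤ r) (htr : t ≤ r) :
    dist (eulerGrid F p₀ τ ⌊r / τ⌋₊) (eulerCurve F p₀ τ t) ≤ L * (τ + (r - t)) := by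
  have hlo : ⌊r / τ⌋₊ * τ ≤ r := (le_div_iff₀ hτ).1 (Nat.floor_le (div_nonneg hr hτ.le))
  have hhi : r < (⌊r / τ⌋₊ + 1) * τ := (div_lt_iff₀ hτ).1 (Nat.lt_floor_add_one _)
  rw [← eulerCurve_natCast_mul hF hτ]
  refine ((lipschitzWith_eulerCurve hF).dist_le_mul _ _).trans ?_
  gcongr
  rw [Real.dist_eq, abs_le]
  constructor <;> linarith

theorem apply_eulerCurve_sub_le [CompleteSpace V] (f : StrongDual ℝ V) {t s M : ℝ} (hts : t ≤ s)
    (hM : ∀ r ∈ Icc t s, f (F (eulerGrid F p₀ τ ⌊r / τ⌋₊)) ≤ M) :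
    f (eulerCurve F p₀ τ s - eulerCurve F p₀ τ t) ≤ (s - t) * M := by
  have hint := intervalIntegrable_eulerGrid_floor hF t s
  have hmono := intervalIntegral.integral_mono_on hts
    ⟨f.integrable_comp hint.1, f.integrable_comp hint.2⟩ intervalIntegrable_const hM
  rw [eulerCurve_sub_eulerCurve hF, ← f.intervalIntegral_comp_comm hint]
  simpa [mul_comm] using hmono

end Bounded

theorem eventually_sub_le_of_tendsto_eulerCurve [CompleteSpace V] {l : Filter ℝ} [l.NeBot]
    (hl : l ≤ 𝓝[>] 0) (hF : ∀ᶠ τ in l, ∀ k, ‖F (eulerGrid F p₀ τ k)‖ ≤ L) {u : ℝ → V}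
    (hu : ∀ t, Tendsto (fun τ => eulerCurve F p₀ τ t) l (𝓝 (u t))) {t : ℝ} (ht : 0 ≤ t)
    (f : StrongDual ℝ V) {M : ℝ} (hM : ∀ᶠ q in 𝓝 (u t), f (F q) ≤ M) :
    ∀ᶠ s in 𝓝[>] t, f (u s - u t) ≤ (s - t) * M := by
  obtain ⟨ρ, hρ, hball⟩ := Metric.eventually_nhds_iff.1 hM
  have hshort : ∀ᶠ s in 𝓝[>] t, (L : ℝ) * (s - t) < ρ / 3 := by
    have : Tendsto (fun s => (L : ℝ) * (s - t)) (𝓝 t) (𝓝 0) :=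
      (by fun_prop : Continuous fun s => (L : ℝ) * (s - t)).tendsto' t 0 (by simp)
    exact this.mono_left nhdsWithin_le_nhds (Iio_mem_nhds (by positivity))
  have hτ : Tendsto (fun τ => (L : ℝ) * τ) l (𝓝 0) := by
    simpa using (tendsto_id.mono_left (hl.trans nhdsWithin_le_nhds)).const_mul (L : ℝ)
  filter_upwards [hshort, self_mem_nhdsWithin] with s hs (hts : t < s)
  refine le_of_tendsto ((f.continuous.tendsto _).comp ((hu s).sub (hu t))) ?_
  filter_upwards [hF, hl self_mem_nhdsWithin, hτ (Iio_mem_nhds (by positivity : 0 < ρ / 3)),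
    hu t (ball_mem_nhds _ (by positivity : 0 < ρ / 3))] with τ hFτ (hτ0 : 0 < τ)
    (hLτ : (L : ℝ) * τ < ρ / 3) (hdist : dist (eulerCurve F p₀ τ t) (u t) < ρ / 3)
  refine apply_eulerCurve_sub_le hFτ f hts.le fun r hr => hball ?_
  calc dist (eulerGrid F p₀ τ ⌊r / τ⌋₊) (u t)
      ≤ dist (eulerGrid F p₀ τ ⌊r / τ⌋₊) (eulerCurve F p₀ τ t)
        + dist (eulerCurve F p₀ τ t) (u t) := dist_triangle _ _ _
    _ ≤ L * τ + L * (s - t) + dist (eulerCurve F p₀ τ t) (u t) := by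
        rw [← mul_add]
        gcongr
        exact (dist_eulerGrid_floor_eulerCurve_le hFτ hτ0 (ht.trans hr.1) hr.1).trans
          (by gcongr; exact hr.2)
    _ < ρ := by linarith

end Euler

theorem norm_add_sum_smul_sub_le {W ι : Type*} [SeminormedAddCommGroup W] [NormedSpace ℝ W]
    (s : Finset ι) {c : ι → ℝ} (hc : ∀ j ∈ s, 0 ≤ c j) (hcs : ∑ j ∈ s, c j ≤ 1) {x : W}
    {y : ι → W} {R : ℝ} (hx : ‖x‖ ≤ R) (hy : ∀ j ∈ s, ‖y j‖ ≤ R) :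
    ‖x + ∑ j ∈ s, c j • (y j - x)‖ ≤ R := by
  have hrw : x + ∑ j ∈ s, c j • (y j - x) = (1 - ∑ j ∈ s, c j) • x + ∑ j ∈ s, c j • y j := by
    simp only [smul_sub, Finset.sum_sub_distrib, sub_smul, one_smul, Finset.sum_smul]
    abel
  rw [hrw]
  calc ‖(1 - ∑ j ∈ s, c j) • x + ∑ j ∈ s, c j • y j‖
      ≤ (1 - ∑ j ∈ s, c j) * R + ∑ j ∈ s, c j * R := by
        refine (norm_add_le _ _).trans (add_le_add ?_ ((norm_sum_le _ _).trans
          (Finset.sum_le_sum fun j hj => ?_)))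
        · rw [norm_smul, Real.norm_of_nonneg (sub_nonneg.2 hcs)]
          exact mul_le_mul_of_nonneg_left hx (sub_nonneg.2 hcs)
        · rw [norm_smul, Real.norm_of_nonneg (hc j hj)]
          exact mul_le_mul_of_nonneg_left (hy j hj) (hc j hj)
    _ = R := by rw [← Finset.sum_mul]; ring

namespace SensitivityAlignment

variable {d N : ℕ}

abbrev State (d N : ℕ) : Type := (Fin N → E d) × (Fin N → E d)

def sensitivity (K : E d → Set (E d)) (p : E d × E d) : ℝ :=
  (K p.2).indicator (fun _ => 1) p.1

def clusterSlopes (K : E d → Set (E d)) (x v : E d) : Set ℝ :=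
  {α | MapClusterPt α (𝓝 (x, v)) (sensitivity K)}

variable {K : E d → Set (E d)} {x v : E d}

theorem sensitivity_mem_Icc (p : E d × E d) : sensitivity K p ∈ Icc (0 : ℝ) 1 := by
  unfold sensitivity
  by_cases h : p.1 ∈ K p.2 <;> simp [h]

theorem clusterSlopes_subset_Icc : clusterSlopes K x v ⊆ Icc 0 1 := fun _ hα =>
  isClosed_Icc.mem_of_mapClusterPt hα (Eventually.of_forall sensitivity_mem_Icc)

theorem isCompact_clusterSlopes : IsCompact (clusterSlopes K x v) :=
  isCompact_Icc.of_isClosed_subset isClosed_setOfPred_clusterPt clusterSlopes_subset_Icc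

theorem clusterSlopes_nonempty : (clusterSlopes K x v).Nonempty :=
  let ⟨α, _, hα⟩ := isCompact_Icc.exists_mapClusterPt (f := 𝓝 (x, v)) (u := sensitivity K)
    (le_principal_iff.2 (mem_map.2 (univ_mem' sensitivity_mem_Icc)))
  ⟨α, hα⟩

theorem admissibleSlopes_eq_convexHull_clusterSlopes :
    admissibleSlopes K x v = convexHull ℝ (clusterSlopes K x v) := by
  refine congrArg (convexHull ℝ) (Set.ext fun α => ?_)
  exact ⟨fun h => mapClusterPt_iff_exists_seq_tendsto.2 h.2, fun h => ⟨clusterSlopes_subset_Icc h,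
    mapClusterPt_iff_exists_seq_tendsto.1 h⟩⟩

theorem isCompact_admissibleSlopes : IsCompact (admissibleSlopes K x v) := by
  rw [admissibleSlopes_eq_convexHull_clusterSlopes,
    convexHull_eq_Icc_of_isCompact isCompact_clusterSlopes clusterSlopes_nonempty]
  exact isCompact_Icc

theorem exists_mem_admissibleSlopes_eventually_mul_lt (c : ℝ) {δ : ℝ} (hδ : 0 < δ) :
    ∃ α ∈ admissibleSlopes K x v, ∀ᶠ p in 𝓝 (x, v), sensitivity K p * c < α * c + δ := by
  obtain ⟨α, hα, hmax⟩ := isCompact_clusterSlopes.exists_isMaxOn clusterSlopes_nonempty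
    (continuous_id.mul continuous_const).continuousOn
  refine ⟨α, admissibleSlopes_eq_convexHull_clusterSlopes ▸ subset_convexHull ℝ _ hα, ?_⟩
  have hlim := isCompact_Icc.tendsto_nhdsSet_of_mapClusterPt (s' := clusterSlopes K x v)
    (Eventually.of_forall sensitivity_mem_Icc) fun β _ hβ => hβ
  exact hlim ((isOpen_lt (by fun_prop) continuous_const).mem_nhdsSet.2 fun β hβ =>
    (hmax hβ : β * c ≤ α * c).trans_lt (lt_add_of_pos_right _ hδ))

def alignmentField (K : E d → Set (E d)) (m : Fin N → ℝ) (p : State d N) : State d N :=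
  (p.2, fun i => ∑ j ∈ Finset.univ.erase i,
    (sensitivity K (p.1 i - p.1 j, p.2 i) * m j) • (p.2 j - p.2 i))

def accelerationSet (K : E d → Set (E d)) (m : Fin N → ℝ) (p : State d N) (i : Fin N) :
    Set (E d) :=
  (fun α : Fin N → ℝ => ∑ j ∈ Finset.univ.erase i, (α j * m j) • (p.2 j - p.2 i)) ''
    univ.pi fun j => admissibleSlopes K (p.1 i - p.1 j) (p.2 i)

variable {m : Fin N → ℝ}

theorem convex_accelerationSet (p : State d N) (i : Fin N) :
    Convex ℝ (accelerationSet K m p i) := by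
  refine (convex_pi fun j _ => convex_convexHull ℝ _).is_linear_image ⟨fun α β => ?_, fun c α => ?_⟩
  · simp only [Pi.add_apply, add_mul, add_smul, Finset.sum_add_distrib]
  · simp only [Pi.smul_apply, smul_eq_mul, Finset.smul_sum, smul_smul, mul_assoc]

theorem isClosed_accelerationSet (p : State d N) (i : Fin N) :
    IsClosed (accelerationSet K m p i) :=
  ((isCompact_univ_pi fun _ => isCompact_admissibleSlopes).image (by fun_prop)).isClosed

section Bounds

variable (hm : ∀ j, 0 ≤ m j) (hsum : ∑ j, m j ≤ 1)
include hm hsum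

theorem sum_erase_le_one (i : Fin N) : ∑ j ∈ Finset.univ.erase i, m j ≤ 1 :=
  (Finset.sum_le_sum_of_subset_of_nonneg (Finset.erase_subset _ _) fun j _ _ => hm j).trans hsum

theorem norm_alignmentField_le (p : State d N) : ‖alignmentField K m p‖ ≤ 2 * ‖p.2‖ := by
  refine max_le (by dsimp only [alignmentField]; linarith [norm_nonneg p.2])
    ((pi_norm_le_iff_of_nonneg (by positivity)).2 fun i => ?_)
  dsimp only [alignmentField]
  refine (norm_sum_le _ _).trans ?_
  calc ∑ j ∈ Finset.univ.erase i, ‖(sensitivity K (p.1 i - p.1 j, p.2 i) * m j) • (p.2 j - p.2 i)‖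
      ≤ ∑ j ∈ Finset.univ.erase i, m j * (2 * ‖p.2‖) := by
        refine Finset.sum_le_sum fun j _ => ?_
        obtain ⟨h0, h1⟩ := sensitivity_mem_Icc (K := K) (p.1 i - p.1 j, p.2 i)
        rw [norm_smul, Real.norm_of_nonneg (mul_nonneg h0 (hm j))]
        refine mul_le_mul (mul_le_of_le_one_left (hm j) h1) ?_ (norm_nonneg _) (hm j)
        exact (norm_sub_le _ _).trans (by linarith [norm_le_pi_norm p.2 j, norm_le_pi_norm p.2 i])
    _ ≤ 2 * ‖p.2‖ := by
        rw [← Finset.sum_mul]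
        exact mul_le_of_le_one_left (by positivity) (sum_erase_le_one hm hsum i)

theorem norm_eulerGrid_snd_le (p₀ : State d N) {τ : ℝ} (hτ₀ : 0 ≤ τ) (hτ₁ : τ ≤ 1) (k : ℕ) :
    ‖(eulerGrid (alignmentField K m) p₀ τ k).2‖ ≤ ‖p₀.2‖ := by
  induction k with
  | zero => rfl
  | succ k ih =>
    set p := eulerGrid (alignmentField K m) p₀ τ k
    refine (pi_norm_le_iff_of_nonneg (norm_nonneg _)).2 fun i => ?_
    have hc : ∀ j ∈ Finset.univ.erase i, 0 ≤ τ * (sensitivity K (p.1 i - p.1 j, p.2 i) * m j) :=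
      fun j _ => mul_nonneg hτ₀ (mul_nonneg (sensitivity_mem_Icc _).1 (hm j))
    have hcs : ∑ j ∈ Finset.univ.erase i, τ * (sensitivity K (p.1 i - p.1 j, p.2 i) * m j) ≤ 1 :=
      calc _ ≤ ∑ j ∈ Finset.univ.erase i, m j := Finset.sum_le_sum fun j _ =>
            mul_le_of_le_one_left (mul_nonneg (sensitivity_mem_Icc _).1 (hm j)) hτ₁
              |>.trans (mul_le_of_le_one_left (hm j) (sensitivity_mem_Icc _).2)
        _ ≤ 1 := sum_erase_le_one hm hsum i
    have := norm_add_sum_smul_sub_le _ hc hcs ((norm_le_pi_norm p.2 i).trans ih)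
      fun j _ => (norm_le_pi_norm p.2 j).trans ih
    simpa [eulerGrid, alignmentField, Finset.smul_sum, smul_smul] using this

theorem exists_mem_accelerationSet_eventually_le (p : State d N) (i : Fin N)
    (f : StrongDual ℝ (E d)) {δ : ℝ} (hδ : 0 < δ) :
    ∃ y ∈ accelerationSet K m p i,
      ∀ᶠ q in 𝓝 p, f ((alignmentField K m q).2 i) ≤ f y + δ := by
  set c : Fin N → ℝ := fun j => f (p.2 j - p.2 i)
  choose α hα hsens using fun j => exists_mem_admissibleSlopes_eventually_mul_lt (K := K)
    (x := p.1 i - p.1 j) (v := p.2 i) (c j) (half_pos hδ)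
  refine ⟨_, ⟨α, fun j _ => hα j, rfl⟩, ?_⟩
  have hsens' : ∀ j, ∀ᶠ q : State d N in 𝓝 p,
      sensitivity K (q.1 i - q.1 j, q.2 i) * c j < α j * c j + δ / 2 := fun j =>
    ((by fun_prop : Continuous fun q : State d N => (q.1 i - q.1 j, q.2 i)).tendsto p).eventually
      (hsens j)
  have hc : ∀ j, ∀ᶠ q : State d N in 𝓝 p, dist (f (q.2 j - q.2 i)) (c j) < δ / 2 := fun j =>
    ((by fun_prop : Continuous fun q : State d N => f (q.2 j - q.2 i)).tendsto p)
      (ball_mem_nhds _ (half_pos hδ))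
  filter_upwards [eventually_all.2 hsens', eventually_all.2 hc] with q hq hqc
  have hterm : ∀ j ∈ Finset.univ.erase i,
      sensitivity K (q.1 i - q.1 j, q.2 i) * m j * f (q.2 j - q.2 i)
        ≤ α j * m j * c j + m j * δ := by
    intro j _
    set s := sensitivity K (q.1 i - q.1 j, q.2 i)
    obtain ⟨h0, h1⟩ : s ∈ Icc 0 1 := sensitivity_mem_Icc _
    have hdev : s * (f (q.2 j - q.2 i) - c j) ≤ δ / 2 := by
      have := (abs_lt.1 ((Real.dist_eq _ _).symm.trans_lt (hqc j))).2
      nlinarith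
    have hsF : s * f (q.2 j - q.2 i) ≤ α j * c j + δ := by
      linarith [hq j, mul_sub s (f (q.2 j - q.2 i)) (c j)]
    linarith [mul_le_mul_of_nonneg_left hsF (hm j)]
  calc f ((alignmentField K m q).2 i)
      = ∑ j ∈ Finset.univ.erase i,
          sensitivity K (q.1 i - q.1 j, q.2 i) * m j * f (q.2 j - q.2 i) := by
        simp [alignmentField, map_sum, map_smul]
    _ ≤ ∑ j ∈ Finset.univ.erase i, (α j * m j * c j + m j * δ) := Finset.sum_le_sum hterm
    _ ≤ f (∑ j ∈ Finset.univ.erase i, (α j * m j) • (p.2 j - p.2 i)) + δ := by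
        rw [Finset.sum_add_distrib, ← Finset.sum_mul, map_sum]
        simp only [map_smul, smul_eq_mul, c]
        nlinarith [sum_erase_le_one hm hsum i]

theorem norm_alignmentField_eulerGrid_le (p₀ : State d N) {τ : ℝ} (hτ₀ : 0 ≤ τ) (hτ₁ : τ ≤ 1)
    (k : ℕ) :
    ‖alignmentField K m (eulerGrid (alignmentField K m) p₀ τ k)‖ ≤ (2 * ‖p₀.2‖₊ : ℝ≥0) := by
  push_cast
  exact (norm_alignmentField_le hm hsum _).trans
    (by gcongr; exact norm_eulerGrid_snd_le hm hsum p₀ hτ₀ hτ₁ k)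

theorem exists_lipschitz_solution (p₀ : State d N) :
    ∃ u : ℝ → State d N, (∃ L, LipschitzWith L u) ∧ u 0 = p₀ ∧ ∀ t, 0 ≤ t → ∀ i,
      (∀ y, HasDerivAt (fun s => (u s).1 i) y t → y = (u t).2 i) ∧
      (∀ y, HasDerivAt (fun s => (u s).2 i) y t → y ∈ accelerationSet K m (u t) i) := by
  set L : ℝ≥0 := 2 * ‖p₀.2‖₊
  have hF : ∀ᶠ τ in 𝓝[>] (0 : ℝ),
      ∀ k, ‖alignmentField K m (eulerGrid (alignmentField K m) p₀ τ k)‖ ≤ L := by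
    filter_upwards [Ioo_mem_nhdsGT one_pos] with τ hτ
    exact norm_alignmentField_eulerGrid_le hm hsum p₀ hτ.1.le hτ.2.le
  obtain ⟨U, hU, u, hu⟩ := exists_ultrafilter_tendsto_pi (l := 𝓝[>] (0 : ℝ))
    (f := eulerCurve (alignmentField K m) p₀) (K := fun t => closedBall p₀ (L * |t|))
    (fun _ => isCompact_closedBall _ _) (hF.mono fun τ hτ t => by
      simpa [eulerCurve_zero, Real.dist_eq] using
        (lipschitzWith_eulerCurve hτ).dist_le_mul t 0)
  have hUF : ∀ᶠ τ in (U : Filter ℝ), _ := hU hF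
  refine ⟨u, ⟨L, ?_⟩, ?_, fun t ht i => ⟨fun y hy => ?_, fun y hy => ?_⟩⟩
  · exact (isClosed_setOfPred_lipschitzWith L).mem_of_tendsto (tendsto_pi_nhds.2 hu)
      (hUF.mono fun τ hτ => lipschitzWith_eulerCurve hτ)
  · refine tendsto_nhds_unique (hu 0) ?_
    simp only [eulerCurve_zero, tendsto_const_nhds]
  · refine (convex_singleton _).mem_of_hasDerivAt_of_eventually_le isClosed_singleton hy
      fun f δ hδ => ⟨_, rfl, ?_⟩
    refine eventually_sub_le_of_tendsto_eulerCurve hU hUF hu ht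
      (f.comp ((ContinuousLinearMap.proj i).comp (ContinuousLinearMap.fst ℝ _ _))) ?_
    exact ((by fun_prop : Continuous fun q : State d N => f (q.2 i)).tendsto (u t)).eventually
      (gt_mem_nhds (lt_add_of_pos_right _ hδ)) |>.mono fun q hq => hq.le
  · refine (convex_accelerationSet _ _).mem_of_hasDerivAt_of_eventually_le
      (isClosed_accelerationSet _ _) hy fun f δ hδ => ?_
    obtain ⟨y, hy, hev⟩ := exists_mem_accelerationSet_eventually_le hm hsum (u t) i f hδ
    exact ⟨y, hy, eventually_sub_le_of_tendsto_eulerCurve hU hUF hu ht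
      (f.comp ((ContinuousLinearMap.proj i).comp (ContinuousLinearMap.snd ℝ _ _))) hev⟩

end Bounds

end SensitivityAlignment

open SensitivityAlignment in
theorem stmt3_general {d : ℕ}
    (K : E d → Set (E d))
    (N : ℕ) (m : Fin N → ℝ) (hm : ∀ i, 0 < m i) (hsum : ∑ i, m i = 1)
    (X0 V0 : Fin N → E d) :
    ∃ X V G : Fin N → ℝ → E d,
      (∀ i, X i 0 = X0 i ∧ V i 0 = V0 i) ∧
      (∀ i t, 0 ≤ t → IntervalIntegrable (V i) volume 0 t ∧
        IntervalIntegrable (G i) volume 0 t) ∧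
      (∀ i t, 0 ≤ t → X i t = X0 i + ∫ s in (0:ℝ)..t, V i s) ∧
      (∀ i t, 0 ≤ t → V i t = V0 i + ∫ s in (0:ℝ)..t, G i s) ∧
      (∀ᵐ t ∂(volume.restrict (Set.Ici (0:ℝ))), ∀ i, ∃ α : Fin N → ℝ,
        (∀ j, α j ∈ admissibleSlopes K (X i t - X j t) (V i t)) ∧
        G i t = ∑ j ∈ Finset.univ.erase i, (α j * m j) • (V j t - V i t)) := by
  obtain ⟨u, ⟨L, hu⟩, hu0, hsol⟩ :=
    exists_lipschitz_solution (K := K) (fun i => (hm i).le) hsum.le (X0, V0)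
  have hX : ∀ i, LipschitzWith L fun t => (u t).1 i := fun i => by
    simpa [Function.comp_def] using (LipschitzWith.eval i).comp (LipschitzWith.prod_fst.comp hu)
  have hV : ∀ i, LipschitzWith L fun t => (u t).2 i := fun i => by
    simpa [Function.comp_def] using (LipschitzWith.eval i).comp (LipschitzWith.prod_snd.comp hu)
  refine ⟨fun i t => (u t).1 i, fun i t => (u t).2 i, fun i => deriv fun t => (u t).2 i,
    fun i => by simp [hu0], fun i t _ => ⟨(hV i).continuous.intervalIntegrable _ _,
      (hV i).intervalIntegrable_deriv _ _⟩, fun i t ht => ?_, fun i t _ => ?_, ?_⟩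
  · dsimp only
    rw [(hX i).eq_add_integral_deriv 0 t, hu0]
    refine congrArg _ (intervalIntegral.integral_congr_ae ?_)
    filter_upwards [(hX i).ae_differentiableAt_real] with s hs hmem
    rw [uIoc_of_le ht] at hmem
    exact (hsol s hmem.1.le i).1 _ hs.hasDerivAt
  · dsimp only
    rw [(hV i).eq_add_integral_deriv 0 t, hu0]
  · filter_upwards [ae_restrict_mem measurableSet_Ici,
      ae_restrict_of_ae (ae_all_iff.2 fun i => (hV i).ae_differentiableAt_real)] with t ht hdiff i
    obtain ⟨α, hα, hαG⟩ := (hsol t ht i).2 _ (hdiff i).hasDerivAt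
    exact ⟨α, fun j => hα j (mem_univ j), hαG.symm⟩

/-- Under hypotheses (H1)–(H2) on the sensitivity regions `K(v)`,
for every `N`, weights `m_i > 0` summing to one and initial data `(X_i⁰,V_i⁰)`,
the `N`-particle differential inclusion has a global-in-time solution: locally
absolutely continuous curves (expressed in integral form with locally integrable
derivatives) `X_i, V_i : [0,∞) → ℝ^d` with `X_i(0) = X_i⁰`, `V_i(0) = V_i⁰`,
`X_i'(t) = V_i(t)` and, for a.e. `t ≥ 0`,
`V_i'(t) ∈ { Σ_{j≠i} α_{ij} m_j (V_j(t) − V_i(t)) : α_{ij} ∈ 𝒜(X_i(t)−X_j(t), V_i(t)) }`. -/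
theorem stmt3 {d : ℕ}
    (K Θ : E d → Set (E d)) (𝒦 : Set (E d)) (C : ℝ)
    (hKne : ∀ v, (K v).Nonempty) (hKcp : ∀ v, IsCompact (K v))
    (h𝒦 : IsCompact 𝒦) (hKsub : ∀ v, K v ⊆ 𝒦)
    (hΘcl : ∀ v, IsClosed (Θ v)) (hC : 0 < C)
    (h2i : ∀ v, frontier (K v) ⊆ Θ v)
    (h2ii : ∀ v, ∀ ε ∈ Set.Ioo (0:ℝ) 1,
      volume (Θ v + closedBall (0 : E d) ε) ≤ ENNReal.ofReal (C * ε))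
    (h2iii : ∀ v w, symmDiff (K v) (K w) ⊆ Θ v + closedBall (0 : E d) (C * ‖v - w‖))
    (h2iv : ∀ v w, Θ w ⊆ Θ v + closedBall (0 : E d) (C * ‖v - w‖))
    (N : ℕ) (m : Fin N → ℝ) (hm : ∀ i, 0 < m i) (hsum : ∑ i, m i = 1)
    (X0 V0 : Fin N → E d) :
    ∃ X V G : Fin N → ℝ → E d,
      (∀ i, X i 0 = X0 i ∧ V i 0 = V0 i) ∧
      (∀ i t, 0 ≤ t → IntervalIntegrable (V i) volume 0 t ∧
        IntervalIntegrable (G i) volume 0 t) ∧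
      (∀ i t, 0 ≤ t → X i t = X0 i + ∫ s in (0:ℝ)..t, V i s) ∧
      (∀ i t, 0 ≤ t → V i t = V0 i + ∫ s in (0:ℝ)..t, G i s) ∧
      (∀ᵐ t ∂(volume.restrict (Set.Ici (0:ℝ))), ∀ i, ∃ α : Fin N → ℝ,
        (∀ j, α j ∈ admissibleSlopes K (X i t - X j t) (V i t)) ∧
        G i t = ∑ j ∈ Finset.univ.erase i, (α j * m j) • (V j t - V i t)) :=
  stmt3_general K N m hm hsum X0 V0
end
end

section
/- Let N ∈ ℕ and m₁, …, m_N > 0. Suppose V₁, …, V_N : [0,∞) → ℝ^d are locally absolutely continuous and for almost every t ≥ 0 there exist coefficients a_{ij}(t) ∈ [0,1] (for j ≠ i) such that V_i'(t) = Σ_{j≠i} a_{ij}(t) m_j (V_j(t) − V_i(t)) for every i. Then the maximal speed is nonincreasing: max_{1≤i≤N} |V_i(t)| ≤ max_{1≤i≤N} |V_i(0)| for all t ≥ 0. -/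
open MeasureTheory Metric Set
noncomputable section

/-! With `K = ∑ⱼ mⱼ`, the weighted velocity `e^{Kt} Vᵢ(t)` has derivative `e^{Kt} (Vᵢ' + K Vᵢ)`,
and `Vᵢ' + K Vᵢ = ∑_{j ≠ i} aᵢⱼ mⱼ Vⱼ + (K - ∑_{j ≠ i} aᵢⱼ mⱼ) Vᵢ` is a nonnegative combination
of the velocities of total weight `K`, so its norm is at most `K M(t)`, where
`M(t) = maxⱼ |Vⱼ(t)|`. Integrating gives `e^{Kt} M(t) ≤ M(0) + ∫₀ᵗ K e^{Ks} M(s) ds`, and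
Grönwall's inequality turns this into `e^{Kt} M(t) ≤ e^{Kt} M(0)`. Since the `Vᵢ` are only
absolutely continuous, the product rule for `e^{Kt} Vᵢ(t)` is proved with Fubini's theorem. -/

section

open Real

variable {F : Type*} [NormedAddCommGroup F] [NormedSpace ℝ F]

theorem integral_deriv_smul_primitive [CompleteSpace F] {φ φ' : ℝ → ℝ} {g : ℝ → F} {a b : ℝ}
    (hab : a ≤ b) (hφ : ∀ s ∈ Icc a b, HasDerivAt φ (φ' s) s) (hφ' : ContinuousOn φ' (Icc a b))
    (hg : IntervalIntegrable g volume a b) :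
    ∫ s in a..b, φ' s • ∫ u in a..s, g u = ∫ u in a..b, (φ b - φ u) • g u := by
  set μ := volume.restrict (Ioc a b)
  -- `H` lives on the triangle `u ≤ s`; integrating out `u` or `s` first gives the two sides.
  set H : ℝ × ℝ → F := {p : ℝ × ℝ | p.2 ≤ p.1}.indicator fun p => φ' p.1 • g p.2
  have hH : Integrable H (μ.prod μ) :=
    ((hφ'.integrableOn_Icc.mono_set Ioc_subset_Icc_self).smul_prod
      (hg.1 : Integrable g μ)).indicator (measurableSet_le measurable_snd measurable_fst)
  have inner_u : ∀ s ∈ Ioc a b, ∫ u, H (s, u) ∂μ = φ' s • ∫ u in a..s, g u := by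
    intro s hs
    have : (fun u => H (s, u)) = (Iic s).indicator fun u => φ' s • g u := by
      ext u; simp [H, indicator_apply]
    rw [this, setIntegral_indicator measurableSet_Iic, Ioc_inter_Iic, inf_eq_right.2 hs.2,
      integral_smul, intervalIntegral.integral_of_le hs.1.le]
  have inner_s : ∀ u ∈ Ioc a b, ∫ s, H (s, u) ∂μ = (φ b - φ u) • g u := by
    intro u hu
    have : (fun s => H (s, u)) = (Ici u).indicator fun s => φ' s • g u := by
      ext s; simp [H, indicator_apply]
    have hIcc : Ioc a b ∩ Ici u = Icc u b := by
      ext s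
      simp only [mem_inter_iff, mem_Ioc, mem_Ici, mem_Icc]
      exact ⟨fun ⟨⟨_, hsb⟩, hus⟩ => ⟨hus, hsb⟩, fun ⟨hus, hsb⟩ => ⟨⟨hu.1.trans_le hus, hsb⟩, hus⟩⟩
    have hIcc' : Icc u b ⊆ Icc a b := Icc_subset_Icc_left hu.1.le
    rw [this, setIntegral_indicator measurableSet_Ici, hIcc, integral_smul_const,
      integral_Icc_eq_integral_Ioc, ← intervalIntegral.integral_of_le hu.2,
      intervalIntegral.integral_eq_sub_of_hasDerivAt
        (fun s hs => hφ s (hIcc' (uIcc_of_le hu.2 ▸ hs)))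
        ((hφ'.mono hIcc').intervalIntegrable_of_Icc hu.2)]
  simp only [intervalIntegral.integral_of_le hab]
  calc ∫ s in Ioc a b, φ' s • ∫ u in a..s, g u
      = ∫ s, ∫ u, H (s, u) ∂μ ∂μ := (setIntegral_congr_fun measurableSet_Ioc inner_u).symm
    _ = ∫ u, ∫ s, H (s, u) ∂μ ∂μ := integral_integral_swap hH
    _ = ∫ u in Ioc a b, (φ b - φ u) • g u := setIntegral_congr_fun measurableSet_Ioc inner_s

theorem continuousOn_of_eq_add_integral {V G : ℝ → F} {a b : ℝ}
    (hG : IntervalIntegrable G volume a b) (hV : ∀ s ∈ Icc a b, V s = V a + ∫ u in a..s, G u) :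
    ContinuousOn V (Icc a b) :=
  (continuousOn_const.add ((intervalIntegral.continuousOn_primitive_interval' hG
    left_mem_uIcc).mono Icc_subset_uIcc)).congr hV

theorem smul_eq_add_integral_of_eq_add_integral [CompleteSpace F] {φ φ' : ℝ → ℝ} {V G : ℝ → F}
    {a b : ℝ} (hab : a ≤ b) (hφ : ∀ s ∈ Icc a b, HasDerivAt φ (φ' s) s)
    (hφ' : ContinuousOn φ' (Icc a b))
    (hG : IntervalIntegrable G volume a b) (hV : ∀ s ∈ Icc a b, V s = V a + ∫ u in a..s, G u) :
    φ b • V b = φ a • V a + ∫ s in a..b, (φ s • G s + φ' s • V s) := by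
  have hφc : ContinuousOn φ (Icc a b) := fun s hs => (hφ s hs).continuousAt.continuousWithinAt
  have hφG : IntervalIntegrable (fun s => φ s • G s) volume a b :=
    hG.continuousOn_smul (uIcc_of_le hab ▸ hφc)
  have hφ'int : IntervalIntegrable φ' volume a b := hφ'.intervalIntegrable_of_Icc hab
  have hprim : IntervalIntegrable (fun s => φ' s • ∫ u in a..s, G u) volume a b :=
    (hφ'.smul ((intervalIntegral.continuousOn_primitive_interval' hG
      left_mem_uIcc).mono Icc_subset_uIcc)).intervalIntegrable_of_Icc hab
  have hconst : IntervalIntegrable (fun s => φ' s • V a) volume a b :=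
    (hφ'.smul continuousOn_const).intervalIntegrable_of_Icc hab
  have hφ'V : ∫ s in a..b, φ' s • V s
      = (φ b - φ a) • V a + ∫ u in a..b, (φ b - φ u) • G u := by
    rw [← integral_deriv_smul_primitive hab hφ hφ' hG,
      ← intervalIntegral.integral_eq_sub_of_hasDerivAt
        (fun s hs => hφ s (uIcc_of_le hab ▸ hs)) hφ'int,
      ← intervalIntegral.integral_smul_const, ← intervalIntegral.integral_add hconst hprim]
    refine intervalIntegral.integral_congr fun s hs => ?_
    simp only [hV s (uIcc_of_le hab ▸ hs), smul_add]
  have hφ'Vint : IntervalIntegrable (fun s => φ' s • V s) volume a b :=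
    (hφ'.smul (continuousOn_of_eq_add_integral hG hV)).intervalIntegrable_of_Icc hab
  have hsplit : ∫ u in a..b, (φ b - φ u) • G u
      = φ b • (∫ u in a..b, G u) - ∫ u in a..b, φ u • G u := by
    simp only [sub_smul]
    rw [intervalIntegral.integral_sub (f := fun u => φ b • G u) (hG.smul (φ b)) hφG,
      intervalIntegral.integral_smul]
  rw [intervalIntegral.integral_add hφG hφ'Vint, hφ'V, hsplit, hV b ⟨hab, le_rfl⟩]
  simp only [smul_add, sub_smul]
  abel

theorem norm_sum_smul_sub_add_smul_le {ι : Type*} (s : Finset ι) (v : ι → F) (c : ι → ℝ) (i : ι)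
    (hc : ∀ j ∈ s, 0 ≤ c j) {K R : ℝ} (hK : ∑ j ∈ s, c j ≤ K) (hv : ∀ j, ‖v j‖ ≤ R) :
    ‖∑ j ∈ s, c j • (v j - v i) + K • v i‖ ≤ K * R := by
  have hcombination : ∑ j ∈ s, c j • (v j - v i) + K • v i
      = ∑ j ∈ s, c j • v j + (K - ∑ j ∈ s, c j) • v i := by
    simp only [smul_sub, Finset.sum_sub_distrib, sub_smul, Finset.sum_smul]
    abel
  calc ‖∑ j ∈ s, c j • (v j - v i) + K • v i‖
      ≤ ∑ j ∈ s, c j * R + (K - ∑ j ∈ s, c j) * R := by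
        rw [hcombination]
        refine norm_add_le_of_le (norm_sum_le_of_le _ fun j hj => ?_) ?_
        · rw [norm_smul_of_nonneg (hc j hj)]
          exact mul_le_mul_of_nonneg_left (hv j) (hc j hj)
        · rw [norm_smul_of_nonneg (sub_nonneg.2 hK)]
          exact mul_le_mul_of_nonneg_left (hv i) (sub_nonneg.2 hK)
    _ = K * R := by rw [← Finset.sum_mul]; ring

theorem exp_mul_norm_le_add_integral [CompleteSpace F] {V G : ℝ → F} {M : ℝ → ℝ} {K x c : ℝ}
    (hx : 0 ≤ x) (hG : IntervalIntegrable G volume 0 x)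
    (hV : ∀ s ∈ Icc 0 x, V s = V 0 + ∫ u in 0..s, G u) (hM : ContinuousOn M (Icc 0 x))
    (hV0 : ‖V 0‖ ≤ c) (hbound : ∀ᵐ s, s ∈ Ioc 0 x → ‖G s + K • V s‖ ≤ K * M s) :
    exp (K * x) * ‖V x‖ ≤ c + ∫ s in 0..x, K * exp (K * s) * M s := by
  have hexp : ∀ s ∈ Icc 0 x, HasDerivAt (fun s => exp (K * s)) (K * exp (K * s)) s :=
    fun s _ => by simpa [mul_comm] using ((hasDerivAt_id s).const_mul K).exp
  have hduhamel := smul_eq_add_integral_of_eq_add_integral hx hexp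
    (by fun_prop : Continuous fun s => K * exp (K * s)).continuousOn hG hV
  calc exp (K * x) * ‖V x‖ = ‖exp (K * x) • V x‖ := by
        rw [norm_smul_of_nonneg (exp_pos _).le]
    _ = ‖V 0 + ∫ s in 0..x, exp (K * s) • (G s + K • V s)‖ := by
        rw [hduhamel, mul_zero, exp_zero, one_smul]
        simp only [smul_add, smul_smul, mul_comm K]
    _ ≤ ‖V 0‖ + ‖∫ s in 0..x, exp (K * s) • (G s + K • V s)‖ := norm_add_le _ _
    _ ≤ c + ∫ s in 0..x, K * exp (K * s) * M s := by
        refine add_le_add hV0 (intervalIntegral.norm_integral_le_of_norm_le hx ?_ ?_)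
        · filter_upwards [hbound] with s hs hs'
          rw [norm_smul_of_nonneg (exp_pos _).le]
          exact (mul_le_mul_of_nonneg_left (hs hs') (exp_pos _).le).trans_eq (by ring)
        · exact ((by fun_prop : Continuous fun s => K * exp (K * s)).continuousOn.mul
            hM).intervalIntegrable_of_Icc hx

theorem le_of_exp_mul_le_add_integral {u : ℝ → ℝ} {K T c : ℝ} (hK : 0 ≤ K)
    (hu : ContinuousOn u (Icc 0 T))
    (h : ∀ x ∈ Icc 0 T, exp (K * x) * u x ≤ c + ∫ s in 0..x, K * exp (K * s) * u s) :
    ∀ x ∈ Icc 0 T, u x ≤ c := by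
  set ψ : ℝ → ℝ := fun x => c + ∫ s in 0..x, K * exp (K * s) * u s
  have hcont : ContinuousOn (fun s => K * exp (K * s) * u s) (Icc 0 T) :=
    (by fun_prop : Continuous fun s => K * exp (K * s)).continuousOn.mul hu
  have hderiv : ∀ x ∈ Icc 0 T,
      HasDerivWithinAt ψ (K * exp (K * x) * u x) (Icc 0 T) x := by
    intro x hx
    have : Fact (x ∈ Icc 0 T) := ⟨hx⟩
    exact (intervalIntegral.integral_hasDerivWithinAt_right
      ((hcont.mono (Icc_subset_Icc_right hx.2)).intervalIntegrable_of_Icc hx.1)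
      (hcont.stronglyMeasurableAtFilter_nhdsWithin measurableSet_Icc x) (hcont x hx)).const_add c
  have hgronwall := le_gronwallBound_of_liminf_deriv_right_le (f := ψ) (δ := c) (ε := 0)
    (fun x hx => (hderiv x hx).continuousWithinAt)
    (fun x hx _ hr => ((hderiv x (Ico_subset_Icc_self hx)).mono_of_mem_nhdsWithin
      (Icc_mem_nhdsGE_of_mem hx)).liminf_right_slope_le hr)
    (by simp [ψ])
    (fun x hx => by
      rw [add_zero, mul_assoc]
      exact mul_le_mul_of_nonneg_left (h x (Ico_subset_Icc_self hx)) hK)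
  intro x hx
  have hx' := (h x hx).trans (hgronwall x hx)
  rw [sub_zero, gronwallBound_ε0, mul_comm c] at hx'
  exact le_of_mul_le_mul_left hx' (exp_pos _)

end

/-- Let `m₁,…,m_N > 0` and let `V₁,…,V_N : [0,∞) → ℝ^d` be locally
absolutely continuous (expressed in integral form with locally integrable derivatives
`G_i`) such that for a.e. `t ≥ 0` there exist coefficients `a_{ij}(t) ∈ [0,1]` with
`V_i'(t) = Σ_{j≠i} a_{ij}(t) m_j (V_j(t) − V_i(t))` for every `i`. Then the maximal
speed is nonincreasing: `max_i |V_i(t)| ≤ max_i |V_i(0)|` for all `t ≥ 0`. -/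
theorem stmt4 {d : ℕ} (N : ℕ) (hN : 0 < N) (m : Fin N → ℝ) (hm : ∀ i, 0 < m i)
    (V G : Fin N → ℝ → E d)
    (hInt : ∀ i t, 0 ≤ t → IntervalIntegrable (G i) volume 0 t)
    (hV : ∀ i t, 0 ≤ t → V i t = V i 0 + ∫ s in (0:ℝ)..t, G i s)
    (hG : ∀ᵐ t ∂(volume.restrict (Set.Ici (0:ℝ))), ∃ a : Fin N → Fin N → ℝ,
      (∀ i j, a i j ∈ Set.Icc (0:ℝ) 1) ∧
      ∀ i, G i t = ∑ j ∈ Finset.univ.erase i, (a i j * m j) • (V j t - V i t)) :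
    ∀ t, 0 ≤ t →
      (Finset.univ.sup' ⟨⟨0, hN⟩, Finset.mem_univ _⟩ fun i => ‖V i t‖) ≤
        Finset.univ.sup' ⟨⟨0, hN⟩, Finset.mem_univ _⟩ fun i => ‖V i 0‖ := by
  intro t ht
  set M : ℝ → ℝ := fun s => Finset.univ.sup' ⟨⟨0, hN⟩, Finset.mem_univ _⟩ fun i => ‖V i s‖
  set K : ℝ := ∑ j, m j
  have hK : 0 ≤ K := Finset.sum_nonneg fun j _ => (hm j).le
  have hM : ContinuousOn M (Icc 0 t) := ContinuousOn.finset_sup'_apply _ fun i _ =>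
    (continuousOn_of_eq_add_integral (hInt i t ht) fun s hs => hV i s hs.1).norm
  have hbound : ∀ i, ∀ᵐ s, s ∈ Ici (0:ℝ) → ‖G i s + K • V i s‖ ≤ K * M s := by
    intro i
    filter_upwards [(ae_restrict_iff' measurableSet_Ici).1 hG] with s hs hs0
    obtain ⟨a, ha, hGs⟩ := hs hs0
    rw [hGs i]
    refine norm_sum_smul_sub_add_smul_le _ _ _ _ (fun j _ => mul_nonneg (ha i j).1 (hm j).le) ?_
      fun j => Finset.le_sup' (fun j => ‖V j s‖) (Finset.mem_univ j)
    calc ∑ j ∈ Finset.univ.erase i, a i j * m j ≤ ∑ j ∈ Finset.univ.erase i, m j :=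
          Finset.sum_le_sum fun j _ => mul_le_of_le_one_left (hm j).le (ha i j).2
      _ ≤ K := Finset.sum_le_sum_of_subset_of_nonneg (Finset.erase_subset _ _)
          fun j _ _ => (hm j).le
  refine le_of_exp_mul_le_add_integral hK hM (fun x hx => ?_) t ⟨ht, le_rfl⟩
  obtain ⟨i, -, hi⟩ := Finset.exists_mem_eq_sup' ⟨⟨0, hN⟩, Finset.mem_univ _⟩ fun i => ‖V i x‖
  rw [show M x = ‖V i x‖ from hi]
  exact exp_mul_norm_le_add_integral hx.1 (hInt i x hx.1) (fun s hs => hV i s hs.1)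
    (hM.mono (Icc_subset_Icc_right hx.2)) (Finset.le_sup' (fun j => ‖V j 0‖) (Finset.mem_univ i))
    ((hbound i).mono fun s hs hs' => hs (mem_Ici.2 hs'.1.le))
end
end

section
/- Assume the set-valued map K satisfies (H1) and (H2). Let f : ℝ^d × ℝ^d → [0,∞) be measurable with f ∈ L¹ ∩ L∞(ℝ^d × ℝ^d), and suppose there is R > 0 such that f(y,w) = 0 whenever |w| > R. Then there exists a constant C' > 0, depending only on d, R, ‖f‖_{L¹∩L∞}, and the constants in (H1)–(H2), such that for all x, v, x̃, ṽ ∈ ℝ^d: |F(f)(x,v)| ≤ C'(1 + |v|) ‖f‖_{L¹} and |F(f)(x,v) − F(f)(x̃,ṽ)| ≤ C'(1 + |v|)(|x − x̃| + |v − ṽ|); that is, the force field F(f) grows at most linearly at infinity and is locally Lipschitz in phase space. -/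
open MeasureTheory Metric Set Pointwise
noncomputable section

/-- The alignment force `F(f)(x,v) = ∫∫ 1_{K(v)}(x−y) (w − v) f(y,w) dy dw`. -/
noncomputable def force {d : ℕ} (K : E d → Set (E d)) (f : E d × E d → ℝ)
    (x v : E d) : E d :=
  ∫ p : E d × E d, (Set.indicator (K v) (fun _ => (1:ℝ)) (x - p.1) * f p) • (p.2 - v)

/-!
The growth bound is immediate from `|1_{K(v)}| ≤ 1` and `|w| ≤ R` on the support of `f`.
For the Lipschitz bound write `F(f)(x,v) − F(f)(x',v')` as the integral of
`(1_{K(v)}(x−y) − 1_{K(v')}(x'−y)) f (w − v)` plus that of `1_{K(v')}(x'−y) f (v' − v)`.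
The second is at most `|v − v'| ‖f‖₁`. In the first, the two indicators can only differ
when `x − y` lies within `ε = C|v − v'| + |x − x'|` of `Θ(v)`: either `x − y` or `x' − y`
lies in `K(v) Δ K(v')`, or the segment from `x − y` to `x' − y` crosses `∂K(v)` or `∂K(v') ⊆ Θ(v)^{C|v−v'|,+}`.
So for `ε < 1` the first integral is at most `(R + |v|) ‖f‖_∞ · Cε · |B_R|`,
and for `ε ≥ 1` the crude bound `(R + |v|) ‖f‖₁` suffices.
-/

theorem IsPreconnected.inter_frontier_nonempty {X : Type*} [TopologicalSpace X] {s t : Set X}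
    (ht : IsPreconnected t) (hts : (t ∩ s).Nonempty) (hts' : (t \ s).Nonempty) :
    (t ∩ frontier s).Nonempty := by
  by_contra h
  have hfr : ∀ z ∈ t, z ∉ frontier s := fun z hz hzs => h ⟨z, hz, hzs⟩
  have hcover : t ⊆ interior s ∪ (closure s)ᶜ := fun z hz => by
    by_cases hzc : z ∈ closure s
    · exact Or.inl (by_contra fun hzi => hfr z hz ⟨hzc, hzi⟩)
    · exact Or.inr hzc
  obtain ⟨a, hat, has⟩ := hts
  have hai : a ∈ interior s := by_contra fun hai => hfr a hat ⟨subset_closure has, hai⟩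
  obtain ⟨b, hbt, hbs⟩ := hts'
  have hti : t ⊆ interior s := ht.subset_left_of_subset_union isOpen_interior
    isClosed_closure.isOpen_compl (disjoint_compl_right.mono_left interior_subset_closure)
    hcover ⟨a, hat, hai⟩
  exact hbs (interior_subset (hti hbt))

section Geometry

variable {V : Type*} [NormedAddCommGroup V]

theorem exists_mem_frontier_dist_le [NormedSpace ℝ V] {s : Set V} {a b : V} (h : a ∈ s ↔ b ∉ s) :
    ∃ z ∈ frontier s, dist a z ≤ dist a b := by
  have hne : (segment ℝ a b ∩ s).Nonempty ∧ (segment ℝ a b \ s).Nonempty := by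
    by_cases ha : a ∈ s
    · exact ⟨⟨a, left_mem_segment ℝ a b, ha⟩, ⟨b, right_mem_segment ℝ a b, h.1 ha⟩⟩
    · exact ⟨⟨b, right_mem_segment ℝ a b, not_not.1 (mt h.2 ha)⟩,
        ⟨a, left_mem_segment ℝ a b, ha⟩⟩
  obtain ⟨z, hz, hzs⟩ := (convex_segment a b).isPreconnected.inter_frontier_nonempty hne.1 hne.2
  exact ⟨z, hzs, by linarith [dist_add_dist_of_mem_segment hz, dist_nonneg (x := z) (y := b)]⟩

theorem mem_add_closedBall_of_dist_le {A : Set V} {z a : V} {r δ : ℝ}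
    (hz : z ∈ A + closedBall 0 r) (h : dist a z ≤ δ) : a ∈ A + closedBall 0 (r + δ) := by
  obtain ⟨y, hy, u, hu, rfl⟩ := hz
  refine ⟨y, hy, u + (a - (y + u)), ?_, by beta_reduce; abel⟩
  rw [mem_closedBall_zero_iff] at hu ⊢
  exact (norm_add_le _ _).trans (add_le_add hu (by rwa [← dist_eq_norm]))

theorem mem_add_closedBall_of_not_mem_iff [NormedSpace ℝ V] {s s' T T' : Set V} {r : ℝ} (hr : 0 ≤ r)
    (hs : frontier s ⊆ T) (hs' : frontier s' ⊆ T')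
    (hss' : symmDiff s s' ⊆ T + closedBall 0 r) (hT' : T' ⊆ T + closedBall 0 r)
    {a b : V} (hab : ¬(a ∈ s ↔ b ∈ s')) : a ∈ T + closedBall 0 (r + dist a b) := by
  suffices ∃ z ∈ T + closedBall 0 r, dist a z ≤ dist a b by
    obtain ⟨z, hz, hdist⟩ := this
    exact mem_add_closedBall_of_dist_le hz hdist
  have hT : T ⊆ T + closedBall 0 r := fun z hz => ⟨z, hz, 0, mem_closedBall_self hr, add_zero z⟩
  by_cases ha : a ∈ s
  · by_cases ha' : a ∈ s'
    · obtain ⟨z, hz, hdist⟩ := exists_mem_frontier_dist_le (s := s') (a := a) (b := b) (by tauto)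
      exact ⟨z, hT' (hs' hz), hdist⟩
    · exact ⟨a, hss' (mem_symmDiff.2 (Or.inl ⟨ha, ha'⟩)), by simp⟩
  · have hb' : b ∈ s' := by tauto
    by_cases hb : b ∈ s
    · obtain ⟨z, hz, hdist⟩ := exists_mem_frontier_dist_le (s := s) (a := a) (b := b) (by tauto)
      exact ⟨z, hT (hs hz), hdist⟩
    · exact ⟨b, hss' (mem_symmDiff.2 (Or.inr ⟨hb', hb⟩)), le_rfl⟩

end Geometry

theorem abs_indicator_one_le {α : Type*} (s : Set α) (a : α) :
    |s.indicator (fun _ => (1:ℝ)) a| ≤ 1 := by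
  by_cases ha : a ∈ s <;> simp [ha]

theorem abs_indicator_one_sub_indicator_one_le {α : Type*} (s t : Set α) (a b : α) :
    |s.indicator (fun _ => (1:ℝ)) a - t.indicator (fun _ => (1:ℝ)) b| ≤ 1 := by
  by_cases ha : a ∈ s <;> by_cases hb : b ∈ t <;> simp [ha, hb]

theorem MeasureTheory.MemLp.ae_norm_le_toReal_eLpNorm_top {α F : Type*} [MeasurableSpace α]
    {μ : Measure α} [NormedAddCommGroup F] {g : α → F} (hg : MemLp g ⊤ μ) :
    ∀ᵐ p ∂μ, ‖g p‖ ≤ (eLpNorm g ⊤ μ).toReal := by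
  have hfin : eLpNormEssSup g μ ≠ ⊤ := by rw [← eLpNorm_exponent_top]; exact hg.2.ne
  filter_upwards [ae_le_eLpNormEssSup (μ := μ) (f := g)] with p hp
  rw [eLpNorm_exponent_top, ← toReal_enorm]
  exact ENNReal.toReal_mono hfin hp

section WeightedIntegrals

variable {V : Type*} [NormedAddCommGroup V] [NormedSpace ℝ V]

theorem norm_mul_smul_le {a t : ℝ} (ha : |a| ≤ 1) (ht : 0 ≤ t) (u : V) :
    ‖(a * t) • u‖ ≤ ‖u‖ * t :=
  calc ‖(a * t) • u‖ = |a| * t * ‖u‖ := by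
        rw [norm_smul, Real.norm_eq_abs, abs_mul, abs_of_nonneg ht]
    _ ≤ 1 * t * ‖u‖ := by gcongr
    _ = ‖u‖ * t := by ring

theorem norm_mul_smul_sub_le {a t R : ℝ} {w : V} (ha : |a| ≤ 1) (ht : 0 ≤ t)
    (hw : R < ‖w‖ → t = 0) (v : V) : ‖(a * t) • (w - v)‖ ≤ (R + ‖v‖) * t := by
  rcases le_or_gt ‖w‖ R with hwR | hwR
  · calc ‖(a * t) • (w - v)‖ ≤ ‖w - v‖ * t := norm_mul_smul_le ha ht _
      _ ≤ (R + ‖v‖) * t := by gcongr; exact (norm_sub_le w v).trans (by linarith)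
  · simp [hw hwR]

variable {α : Type*} [MeasurableSpace α] {μ : Measure α}

theorem norm_integral_mul_smul_le {φ f : α → ℝ} (hφ : ∀ p, |φ p| ≤ 1) (hf : Integrable f μ)
    (hfnn : ∀ p, 0 ≤ f p) (u : V) : ‖∫ p, (φ p * f p) • u ∂μ‖ ≤ ‖u‖ * ∫ p, f p ∂μ := by
  rw [← integral_const_mul]
  exact norm_integral_le_of_norm_le (hf.const_mul _)
    (ae_of_all _ fun p => norm_mul_smul_le (hφ p) (hfnn p) u)

theorem norm_integral_mul_smul_sub_le [MeasurableSpace V] {ν : Measure (α × V)}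
    {φ f : α × V → ℝ} {R : ℝ} (hφ : ∀ p, |φ p| ≤ 1)
    (hf : Integrable f ν) (hfnn : ∀ p, 0 ≤ f p) (hsupp : ∀ p : α × V, R < ‖p.2‖ → f p = 0)
    (v : V) : ‖∫ p, (φ p * f p) • (p.2 - v) ∂ν‖ ≤ (R + ‖v‖) * ∫ p, f p ∂ν := by
  rw [← integral_const_mul]
  exact norm_integral_le_of_norm_le (hf.const_mul _)
    (ae_of_all _ fun p => norm_mul_smul_sub_le (hφ p) (hfnn p) (hsupp p) v)

end WeightedIntegrals

section Force

variable {d : ℕ} {f : E d × E d → ℝ} {R : ℝ}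

theorem integrable_indicator_mul_smul_sub {s : Set (E d)} (hs : MeasurableSet s)
    (hf : Integrable f) (hfnn : ∀ p, 0 ≤ f p) (hsupp : ∀ p : E d × E d, R < ‖p.2‖ → f p = 0)
    (x v : E d) :
    Integrable fun p : E d × E d => (s.indicator (fun _ => (1:ℝ)) (x - p.1) * f p) • (p.2 - v) :=
  (hf.const_mul (R + ‖v‖)).mono'
    ((((measurable_const.indicator hs).comp (measurable_const.sub measurable_fst)
      ).aestronglyMeasurable.mul hf.1).smul (measurable_snd.sub_const v).aestronglyMeasurable)
    (ae_of_all _ fun p => norm_mul_smul_sub_le (abs_indicator_one_le s _) (hfnn p) (hsupp p) v)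

theorem force_sub_force_eq {K : E d → Set (E d)} (hK : ∀ v, MeasurableSet (K v))
    (hf : Integrable f) (hfnn : ∀ p, 0 ≤ f p) (hsupp : ∀ p : E d × E d, R < ‖p.2‖ → f p = 0)
    (x v x' v' : E d) :
    force K f x v - force K f x' v' =
      (∫ p : E d × E d, ((Set.indicator (K v) (fun _ => (1:ℝ)) (x - p.1)
          - Set.indicator (K v') (fun _ => (1:ℝ)) (x' - p.1)) * f p) • (p.2 - v)) +
      ∫ p : E d × E d, (Set.indicator (K v') (fun _ => (1:ℝ)) (x' - p.1) * f p) • (v' - v) := by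
  rw [force, force, ← sub_add_sub_cancel _
      (∫ p : E d × E d, (Set.indicator (K v') (fun _ => (1:ℝ)) (x' - p.1) * f p) • (p.2 - v)) _,
    ← integral_sub (integrable_indicator_mul_smul_sub (hK v) hf hfnn hsupp x v)
      (integrable_indicator_mul_smul_sub (hK v') hf hfnn hsupp x' v),
    ← integral_sub (integrable_indicator_mul_smul_sub (hK v') hf hfnn hsupp x' v)
      (integrable_indicator_mul_smul_sub (hK v') hf hfnn hsupp x' v')]
  congr 1 <;> congr 1 <;> funext p <;> module

theorem norm_integral_mul_smul_sub_le_of_support {φ : E d × E d → ℝ} (hφ : ∀ p, |φ p| ≤ 1)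
    {x : E d} {T : Set (E d)} (hφT : ∀ p, φ p ≠ 0 → x - p.1 ∈ T) (hT : volume T ≠ ⊤)
    (hfnn : ∀ p, 0 ≤ f p) (hsupp : ∀ p : E d × E d, R < ‖p.2‖ → f p = 0)
    {M : ℝ} (hM : ∀ᵐ p, f p ≤ M) (v : E d) :
    ‖∫ p, (φ p * f p) • (p.2 - v)‖ ≤
      (R + ‖v‖) * M * (volume.real T * volume.real (closedBall (0 : E d) R)) := by
  set S := ((fun y => x - y) ⁻¹' T) ×ˢ closedBall (0 : E d) R
  have hS : volume S = volume T * volume (closedBall (0 : E d) R) := by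
    rw [Measure.volume_eq_prod, Measure.prod_prod]
    congr 1
    exact (Measure.measurePreserving_sub_left volume x).measure_preimage_equiv
      (f := MeasurableEquiv.subLeft x) T
  have hzero : ∀ p ∉ S, (φ p * f p) • (p.2 - v) = 0 := by
    intro p hp
    rw [mem_prod, not_and_or, mem_closedBall_zero_iff, not_le] at hp
    rcases hp with hp | hp
    · rw [not_imp_comm.1 (hφT p) hp, zero_mul, zero_smul]
    · rw [hsupp p hp, mul_zero, zero_smul]
  have hSfin : volume S < ⊤ := by
    rw [hS]; exact ENNReal.mul_lt_top hT.lt_top measure_closedBall_lt_top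
  rw [← setIntegral_eq_integral_of_forall_compl_eq_zero hzero]
  refine (norm_setIntegral_le_of_norm_le_const_ae' (C := (R + ‖v‖) * M) hSfin ?_).trans_eq ?_
  · filter_upwards [hM] with p hpM hpS
    have hRv : 0 ≤ R + ‖v‖ := by
      have := mem_closedBall_zero_iff.1 hpS.2
      linarith [norm_nonneg p.2, norm_nonneg v]
    exact (norm_mul_smul_sub_le (hφ p) (hfnn p) (hsupp p) v).trans
      (mul_le_mul_of_nonneg_left hpM hRv)
  · rw [measureReal_def, hS, ENNReal.toReal_mul]; rfl

/-- Hypothesis (H2), with `A + closedBall 0 ε` standing for `A^{ε,+}`. -/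
structure BoundaryControl (K Θ : E d → Set (E d)) (C : ℝ) : Prop where
  frontier_subset : ∀ v, frontier (K v) ⊆ Θ v
  volume_add_closedBall_le : ∀ v, ∀ ε ∈ Ioo (0:ℝ) 1,
    volume (Θ v + closedBall (0 : E d) ε) ≤ ENNReal.ofReal (C * ε)
  symmDiff_subset : ∀ v w, symmDiff (K v) (K w) ⊆ Θ v + closedBall (0 : E d) (C * ‖v - w‖)
  subset_add_closedBall : ∀ v w, Θ w ⊆ Θ v + closedBall (0 : E d) (C * ‖v - w‖)

namespace BoundaryControl

variable {K Θ : E d → Set (E d)} {C : ℝ}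

theorem mem_add_closedBall_of_indicator_ne (hK : BoundaryControl K Θ C) (hC : 0 ≤ C)
    {x x' v v' y : E d}
    (h : (K v).indicator (fun _ => (1:ℝ)) (x - y) ≠ (K v').indicator (fun _ => (1:ℝ)) (x' - y)) :
    x - y ∈ Θ v + closedBall 0 (C * ‖v - v'‖ + ‖x - x'‖) := by
  have hne : ¬(x - y ∈ K v ↔ x' - y ∈ K v') := fun hiff =>
    h (by classical simp only [indicator_apply, hiff])
  simpa [dist_eq_norm] using mem_add_closedBall_of_not_mem_iff (by positivity)
    (hK.frontier_subset v) (hK.frontier_subset v') (hK.symmDiff_subset v v')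
    (hK.subset_add_closedBall v v') hne

theorem norm_integral_indicator_sub_le (hK : BoundaryControl K Θ C) (hC : 0 < C) (hR : 0 ≤ R)
    (hf : Integrable f) (hfnn : ∀ p, 0 ≤ f p) (hsupp : ∀ p : E d × E d, R < ‖p.2‖ → f p = 0)
    {M : ℝ} (hM0 : 0 ≤ M) (hM : ∀ᵐ p, f p ≤ M) (x v x' v' : E d) :
    ‖∫ p : E d × E d, ((Set.indicator (K v) (fun _ => (1:ℝ)) (x - p.1)
        - Set.indicator (K v') (fun _ => (1:ℝ)) (x' - p.1)) * f p) • (p.2 - v)‖ ≤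
      (R + ‖v‖) * ((C + 1) * max (M * C * volume.real (closedBall (0 : E d) R)) (∫ p, f p)
        * (‖x - x'‖ + ‖v - v'‖)) := by
  set ε := C * ‖v - v'‖ + ‖x - x'‖
  set B := volume.real (closedBall (0 : E d) R)
  set L := max (M * C * B) (∫ p, f p)
  have hRv : 0 ≤ R + ‖v‖ := by positivity
  have hL : 0 ≤ L := le_max_of_le_right (integral_nonneg hfnn)
  have hεδ : ε ≤ (C + 1) * (‖x - x'‖ + ‖v - v'‖) := by
    nlinarith [norm_nonneg (x - x'), norm_nonneg (v - v')]
  have hεL : L * ε ≤ (C + 1) * L * (‖x - x'‖ + ‖v - v'‖) := by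
    rw [mul_assoc, mul_left_comm]; exact mul_le_mul_of_nonneg_left hεδ hL
  have hφ := fun p : E d × E d =>
    abs_indicator_one_sub_indicator_one_le (K v) (K v') (x - p.1) (x' - p.1)
  rcases lt_or_ge ε 1 with hε1 | hε1
  · rcases (show 0 ≤ ε by positivity).eq_or_lt with hε0 | hε0
    · obtain ⟨rfl, rfl⟩ : x = x' ∧ v = v' := by
        constructor <;> rw [← sub_eq_zero, ← norm_eq_zero] <;>
          nlinarith [norm_nonneg (x - x'), norm_nonneg (v - v')]
      simp
    · have hT := hK.volume_add_closedBall_le v ε ⟨hε0, hε1⟩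
      calc _ ≤ (R + ‖v‖) * M * (volume.real (Θ v + closedBall (0 : E d) ε) * B) :=
            norm_integral_mul_smul_sub_le_of_support hφ
              (fun p hp => hK.mem_add_closedBall_of_indicator_ne hC.le (sub_ne_zero.1 hp))
              (ne_top_of_le_ne_top ENNReal.ofReal_ne_top hT) hfnn hsupp hM v
        _ ≤ (R + ‖v‖) * M * (C * ε * B) := by
            gcongr; exact ENNReal.toReal_le_of_le_ofReal (by positivity) hT
        _ = (R + ‖v‖) * ((M * C * B) * ε) := by ring
        _ ≤ (R + ‖v‖) * (L * ε) := by gcongr; exact le_max_left _ _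
        _ ≤ _ := by gcongr
  · calc _ ≤ (R + ‖v‖) * ∫ p, f p := norm_integral_mul_smul_sub_le hφ hf hfnn hsupp v
      _ ≤ (R + ‖v‖) * (L * ε) := by
          gcongr; exact (le_max_right _ _).trans (le_mul_of_one_le_right hL hε1)
      _ ≤ _ := by gcongr

theorem norm_force_sub_force_le (hK : BoundaryControl K Θ C) (hKm : ∀ v, MeasurableSet (K v))
    (hC : 0 < C) (hR : 0 ≤ R) (hf : Integrable f) (hfnn : ∀ p, 0 ≤ f p)
    (hsupp : ∀ p : E d × E d, R < ‖p.2‖ → f p = 0) {M : ℝ} (hM0 : 0 ≤ M) (hM : ∀ᵐ p, f p ≤ M)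
    (x v x' v' : E d) :
    ‖force K f x v - force K f x' v'‖ ≤
      (R + ‖v‖) * ((C + 1) * max (M * C * volume.real (closedBall (0 : E d) R)) (∫ p, f p)
        * (‖x - x'‖ + ‖v - v'‖)) + ‖v - v'‖ * ∫ p, f p := by
  have hdrift := norm_integral_mul_smul_le (μ := volume)
    (fun p : E d × E d => abs_indicator_one_le (K v') (x' - p.1)) hf hfnn (v' - v)
  rw [norm_sub_rev] at hdrift
  rw [force_sub_force_eq hKm hf hfnn hsupp]
  exact (norm_add_le _ _).trans
    (add_le_add (hK.norm_integral_indicator_sub_le hC hR hf hfnn hsupp hM0 hM x v x' v') hdrift)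

end BoundaryControl

end Force

theorem stmt5_general {d : ℕ} (K Θ : E d → Set (E d)) (C : ℝ)
    (hKcp : ∀ v, IsCompact (K v))
    (hC : 0 < C)
    (h2i : ∀ v, frontier (K v) ⊆ Θ v)
    (h2ii : ∀ v, ∀ ε ∈ Set.Ioo (0:ℝ) 1,
      volume (Θ v + closedBall (0 : E d) ε) ≤ ENNReal.ofReal (C * ε))
    (h2iii : ∀ v w, symmDiff (K v) (K w) ⊆ Θ v + closedBall (0 : E d) (C * ‖v - w‖))
    (h2iv : ∀ v w, Θ w ⊆ Θ v + closedBall (0 : E d) (C * ‖v - w‖))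
    (f : E d × E d → ℝ) (hfnn : ∀ z, 0 ≤ f z)
    (hfL1 : Integrable f volume) (hfLinf : MemLp f ⊤ volume)
    (R : ℝ) (hR : 0 < R) (hsupp : ∀ z : E d × E d, R < ‖z.2‖ → f z = 0) :
    ∃ C' > 0,
      (∀ x v : E d, ‖force K f x v‖ ≤ C' * (1 + ‖v‖) * ∫ z, f z) ∧
      (∀ x v x' v' : E d, ‖force K f x v - force K f x' v'‖ ≤
        C' * (1 + ‖v‖) * (‖x - x'‖ + ‖v - v'‖)) := by
  have hK : BoundaryControl K Θ C := ⟨h2i, h2ii, h2iii, h2iv⟩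
  have hKm : ∀ v, MeasurableSet (K v) := fun v => (hKcp v).isClosed.measurableSet
  set M := (eLpNorm f ⊤ volume).toReal
  have hM : ∀ᵐ p, f p ≤ M := by
    filter_upwards [hfLinf.ae_norm_le_toReal_eLpNorm_top] with p hp
    exact (le_abs_self _).trans hp
  set I := ∫ z, f z
  set L := (C + 1) * max (M * C * volume.real (closedBall (0 : E d) R)) I
  have hI : 0 ≤ I := integral_nonneg hfnn
  have hL : 0 ≤ L := by positivity
  have hρ : ∀ v : E d, R + ‖v‖ ≤ max R 1 * (1 + ‖v‖) := fun v => by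
    nlinarith [le_max_left R 1, le_max_right R 1, norm_nonneg v]
  refine ⟨max R 1 * (1 + L) + I, by positivity, fun x v => ?_, fun x v x' v' => ?_⟩
  · calc ‖force K f x v‖ ≤ (R + ‖v‖) * I :=
          norm_integral_mul_smul_sub_le (fun _ => abs_indicator_one_le _ _) hfL1 hfnn hsupp v
      _ ≤ _ := by gcongr; nlinarith [hρ v, norm_nonneg v]
  · calc _ ≤ (R + ‖v‖) * (L * (‖x - x'‖ + ‖v - v'‖)) + ‖v - v'‖ * I :=
          hK.norm_force_sub_force_le hKm hC hR.le hfL1 hfnn hsupp ENNReal.toReal_nonneg hM x v x' v'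
      _ ≤ max R 1 * (1 + ‖v‖) * (L * (‖x - x'‖ + ‖v - v'‖))
            + (1 + ‖v‖) * (‖x - x'‖ + ‖v - v'‖) * I := by
          gcongr
          · exact hρ v
          · nlinarith [norm_nonneg v, norm_nonneg (x - x'), norm_nonneg (v - v')]
      _ ≤ _ := by
          have : 0 ≤ max R 1 * (1 + ‖v‖) * (‖x - x'‖ + ‖v - v'‖) := by positivity
          nlinarith

/-- Under (H1)–(H2), for a nonnegative `f ∈ L¹ ∩ L∞(ℝ^d × ℝ^d)`
vanishing for `|w| > R`, the force field `F(f)` grows at most linearly at infinity and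
is locally Lipschitz in phase space: there is `C' > 0` (depending only on `d`, `R`,
`‖f‖_{L¹∩L∞}` and the constants in (H1)–(H2)) with
`|F(f)(x,v)| ≤ C'(1+|v|)‖f‖_{L¹}` and
`|F(f)(x,v) − F(f)(x̃,ṽ)| ≤ C'(1+|v|)(|x−x̃| + |v−ṽ|)`. -/
theorem stmt5 {d : ℕ} (K Θ : E d → Set (E d)) (𝒦 : Set (E d)) (C : ℝ)
    (hKne : ∀ v, (K v).Nonempty) (hKcp : ∀ v, IsCompact (K v))
    (h𝒦 : IsCompact 𝒦) (hKsub : ∀ v, K v ⊆ 𝒦)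
    (hΘcl : ∀ v, IsClosed (Θ v)) (hC : 0 < C)
    (h2i : ∀ v, frontier (K v) ⊆ Θ v)
    (h2ii : ∀ v, ∀ ε ∈ Set.Ioo (0:ℝ) 1,
      volume (Θ v + closedBall (0 : E d) ε) ≤ ENNReal.ofReal (C * ε))
    (h2iii : ∀ v w, symmDiff (K v) (K w) ⊆ Θ v + closedBall (0 : E d) (C * ‖v - w‖))
    (h2iv : ∀ v w, Θ w ⊆ Θ v + closedBall (0 : E d) (C * ‖v - w‖))
    (f : E d × E d → ℝ) (hfmeas : Measurable f) (hfnn : ∀ z, 0 ≤ f z)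
    (hfL1 : Integrable f volume) (hfLinf : MemLp f ⊤ volume)
    (R : ℝ) (hR : 0 < R) (hsupp : ∀ z : E d × E d, R < ‖z.2‖ → f z = 0) :
    ∃ C' > 0,
      (∀ x v : E d, ‖force K f x v‖ ≤ C' * (1 + ‖v‖) * ∫ z, f z) ∧
      (∀ x v x' v' : E d, ‖force K f x v - force K f x' v'‖ ≤
        C' * (1 + ‖v‖) * (‖x - x'‖ + ‖v - v'‖)) :=
  stmt5_general K Θ C hKcp hC h2i h2ii h2iii h2iv f hfnn hfL1 hfLinf R hR hsupp
end
end

section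
/- Let r̃ : [0,∞) → [0,∞) be Lipschitz with constant L ≥ 0, and for v ∈ ℝ^d set K(v) := closed ball B̄(0, r̃(|v|)) ⊆ ℝ^d and Θ(v) := ∂K(v) (the topological boundary of K(v)). Then for all v, w ∈ ℝ^d: (a) K(v) Δ K(w) ⊆ Θ(v)^{L|v−w|,+}, and (b) Θ(w) ⊆ Θ(v)^{L|v−w|,+}; i.e., the velocity-dependent ball family satisfies hypotheses (H2)-(iii) and (H2)-(iv) with constant L. -/
open MeasureTheory Metric Set Pointwise

lemma annulus_mem {E : Type*} [NormedAddCommGroup E] [NormedSpace ℝ E] [Nontrivial E]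
    {r ε : ℝ} (hr : 0 ≤ r) {x : E} (h : |‖x‖ - r| ≤ ε) :
    x ∈ sphere (0 : E) r + closedBall 0 ε := by
  by_cases hx : x = 0
  · subst hx
    simp only [norm_zero, zero_sub, abs_neg, abs_of_nonneg hr] at h
    obtain ⟨y, hy⟩ := exists_norm_eq E hr
    exact ⟨y, by simpa [mem_sphere_zero_iff_norm] using hy,
      -y, by simpa [mem_closedBall_zero_iff, hy], add_neg_cancel y⟩
  · have hxn : (0 : ℝ) < ‖x‖ := norm_pos_iff.mpr hx
    refine ⟨(r / ‖x‖) • x, ?_, x - (r / ‖x‖) • x, ?_, by simp⟩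
    · simp [mem_sphere_zero_iff_norm, norm_smul, abs_div, abs_of_nonneg hr,
        abs_of_pos hxn, div_mul_cancel₀ _ hxn.ne']
    · rw [mem_closedBall_zero_iff]
      have : x - (r / ‖x‖) • x = ((‖x‖ - r) / ‖x‖) • x := by
        rw [sub_div, div_self hxn.ne', sub_smul, one_smul]
      rw [this, norm_smul, Real.norm_eq_abs, abs_div, abs_of_pos hxn,
        div_mul_cancel₀ _ hxn.ne']
      exact h

/-- Let `r̃ : [0,∞) → [0,∞)` be Lipschitz with constant `L`, and set
`K(v) := B̄(0, r̃(|v|))`, `Θ(v) := ∂K(v)` (the sphere of radius `r̃(|v|)`, with the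
convention `∂B̄(0,0) = {0}`). Then for all `v, w`:
(a) `K(v) Δ K(w) ⊆ Θ(v)^{L|v−w|,+}` and (b) `Θ(w) ⊆ Θ(v)^{L|v−w|,+}`;
i.e. the family satisfies (H2)-(iii) and (H2)-(iv) with constant `L`. -/
theorem stmt16 {d : ℕ} (L : ℝ) (hL : 0 ≤ L) (rad : ℝ → ℝ)
    (hnn : ∀ s, 0 ≤ s → 0 ≤ rad s)
    (hLip : ∀ s t, 0 ≤ s → 0 ≤ t → |rad s - rad t| ≤ L * |s - t|) :
    ∀ v w : EuclideanSpace ℝ (Fin d),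
      symmDiff (closedBall (0 : EuclideanSpace ℝ (Fin d)) (rad ‖v‖))
          (closedBall 0 (rad ‖w‖)) ⊆
        sphere (0 : EuclideanSpace ℝ (Fin d)) (rad ‖v‖) + closedBall 0 (L * ‖v - w‖) ∧
      sphere (0 : EuclideanSpace ℝ (Fin d)) (rad ‖w‖) ⊆
        sphere (0 : EuclideanSpace ℝ (Fin d)) (rad ‖v‖) + closedBall 0 (L * ‖v - w‖) := by
  intro v w
  set ε := L * ‖v - w‖ with hε
  have hεnn : 0 ≤ ε := mul_nonneg hL (norm_nonneg _)
  have hrv : 0 ≤ rad ‖v‖ := hnn _ (norm_nonneg _)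
  have hrw : 0 ≤ rad ‖w‖ := hnn _ (norm_nonneg _)
  have hrad : |rad ‖v‖ - rad ‖w‖| ≤ ε := by
    calc |rad ‖v‖ - rad ‖w‖| ≤ L * |‖v‖ - ‖w‖| :=
          hLip _ _ (norm_nonneg _) (norm_nonneg _)
      _ ≤ L * ‖v - w‖ := by
          gcongr
          exact abs_norm_sub_norm_le v w
  rcases subsingleton_or_nontrivial (EuclideanSpace ℝ (Fin d)) with hs | hn
  · have hvw : v = w := Subsingleton.elim _ _
    subst hvw
    constructor
    · simp [symmDiff_self]
    · intro x hx
      exact ⟨x, hx, 0, by simpa [mem_closedBall_zero_iff] using hεnn, add_zero x⟩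
  · constructor
    · intro x hx
      rcases hx with ⟨hx1, hx2⟩ | ⟨hx1, hx2⟩
      · rw [mem_closedBall_zero_iff] at hx1
        rw [mem_closedBall_zero_iff, not_le] at hx2
        refine annulus_mem hrv ?_
        rw [abs_le]
        constructor
        · have : rad ‖v‖ - ‖x‖ ≤ rad ‖v‖ - rad ‖w‖ := by linarith
          have h2 : rad ‖v‖ - rad ‖w‖ ≤ ε := (abs_le.mp hrad).2
          linarith
        · linarith
      · rw [mem_closedBall_zero_iff] at hx1
        rw [mem_closedBall_zero_iff, not_le] at hx2
        refine annulus_mem hrv ?_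
        rw [abs_le]
        have h1 : -(ε) ≤ rad ‖v‖ - rad ‖w‖ := (abs_le.mp hrad).1
        constructor <;> linarith
    · intro x hx
      rw [mem_sphere_zero_iff_norm] at hx
      refine annulus_mem hrv ?_
      rw [hx, abs_sub_comm]
      exact hrad
end

section
/- Let v, w ∈ ℝ^d with |v| = |w| ≠ 0. Then there exists a linear isometry R : ℝ^d → ℝ^d such that Rv = w and |Rx − x| ≤ (|v − w|/|v|) |x| for every x ∈ ℝ^d; in particular, for every r > 0, sup_{|x| ≤ r} |Rx − x| ≤ r |v − w|/|v|. -/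
/-!
Normalise to unit vectors `e = v / ‖v‖` and `e' = w / ‖v‖`, and write `e' = c e + s f` with `f` a
unit vector orthogonal to `e` and `c² + s² = 1`. The rotation `R` by the angle `(c, s)` in the
plane spanned by `e` and `f`, extended by the identity on its orthogonal complement, sends `e` to
`e'`, and `R x - x` only sees the projection of `x` to that plane, on which `R - 1` multiplies
lengths by `√(2 - 2c) = ‖R e - e‖`. By Bessel's inequality, `‖R x - x‖ ≤ ‖e - e'‖ ‖x‖`.
If `e` and `e'` are parallel, `R = ± 1` does the job.
-/

open RealInnerProductSpace

variable {E : Type*} [NormedAddCommGroup E] [InnerProductSpace ℝ E]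

section PlaneRotation

/-- For orthonormal `e, f` and `c ^ 2 + s ^ 2 = 1`: the rotation with cosine `c` and sine `s` in
the plane spanned by `e, f`, extended by the identity on its orthogonal complement. -/
def planeRotation (e f : E) (c s : ℝ) : E →ₗ[ℝ] E where
  toFun x := x + ((c - 1) * ⟪e, x⟫ - s * ⟪f, x⟫) • e + (s * ⟪e, x⟫ + (c - 1) * ⟪f, x⟫) • f
  map_add' x y := by simp only [inner_add_right]; module
  map_smul' r x := by simp only [inner_smul_right, RingHom.id_apply]; module

variable {e f : E} {c s : ℝ}

theorem Orthonormal.inner_pair (hef : Orthonormal ℝ ![e, f]) :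
    ⟪e, e⟫ = 1 ∧ ⟪f, f⟫ = 1 ∧ ⟪e, f⟫ = 0 ∧ ⟪f, e⟫ = 0 := by
  have h := orthonormal_iff_ite.mp hef
  exact ⟨by simpa using h 0 0, by simpa using h 1 1, by simpa using h 0 1, by simpa using h 1 0⟩

theorem planeRotation_sub_self (x : E) : planeRotation e f c s x - x =
    ((c - 1) * ⟪e, x⟫ - s * ⟪f, x⟫) • e + (s * ⟪e, x⟫ + (c - 1) * ⟪f, x⟫) • f := by
  simp only [planeRotation, LinearMap.coe_mk, AddHom.coe_mk]
  abel

theorem planeRotation_apply_left (hef : Orthonormal ℝ ![e, f]) :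
    planeRotation e f c s e = c • e + s • f := by
  obtain ⟨he, -, -, hfe⟩ := hef.inner_pair
  simp only [planeRotation, LinearMap.coe_mk, AddHom.coe_mk, he, hfe]
  module

theorem inner_planeRotation_sub_self (x : E) :
    ⟪x, planeRotation e f c s x - x⟫ = (c - 1) * (⟪e, x⟫ ^ 2 + ⟪f, x⟫ ^ 2) := by
  rw [planeRotation_sub_self]
  simp only [inner_add_right, real_inner_smul_right, real_inner_comm x e, real_inner_comm x f]
  ring

theorem norm_planeRotation_sub_self_sq (hef : Orthonormal ℝ ![e, f]) (hcs : c ^ 2 + s ^ 2 = 1)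
    (x : E) : ‖planeRotation e f c s x - x‖ ^ 2 = (2 - 2 * c) * (⟪e, x⟫ ^ 2 + ⟪f, x⟫ ^ 2) := by
  obtain ⟨he, hf, hef', hfe⟩ := hef.inner_pair
  rw [planeRotation_sub_self, ← real_inner_self_eq_norm_sq]
  simp only [inner_add_left, inner_add_right, real_inner_smul_left, real_inner_smul_right,
    he, hf, hef', hfe]
  linear_combination (⟪e, x⟫ ^ 2 + ⟪f, x⟫ ^ 2) * hcs

theorem norm_planeRotation (hef : Orthonormal ℝ ![e, f]) (hcs : c ^ 2 + s ^ 2 = 1) (x : E) :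
    ‖planeRotation e f c s x‖ = ‖x‖ := by
  have hsq : ‖planeRotation e f c s x‖ ^ 2 = ‖x‖ ^ 2 := by
    rw [← add_sub_cancel x (planeRotation e f c s x), norm_add_sq_real,
      inner_planeRotation_sub_self, norm_planeRotation_sub_self_sq hef hcs]
    ring
  exact (sq_eq_sq₀ (norm_nonneg _) (norm_nonneg _)).mp hsq

theorem norm_planeRotation_sub_self_le (hef : Orthonormal ℝ ![e, f]) (hcs : c ^ 2 + s ^ 2 = 1)
    (x : E) : ‖planeRotation e f c s x - x‖ ≤ ‖planeRotation e f c s e - e‖ * ‖x‖ := by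
  obtain ⟨he, -, -, hfe⟩ := hef.inner_pair
  have hbessel : ⟪e, x⟫ ^ 2 + ⟪f, x⟫ ^ 2 ≤ ‖x‖ ^ 2 := by
    simpa [Fin.sum_univ_two] using hef.sum_inner_products_le (s := Finset.univ) (x := x)
  have hc : c ≤ 1 := by nlinarith [sq_nonneg s]
  rw [← sq_le_sq₀ (norm_nonneg _) (by positivity), mul_pow,
    norm_planeRotation_sub_self_sq hef hcs, norm_planeRotation_sub_self_sq hef hcs, he, hfe]
  nlinarith

end PlaneRotation

theorem exists_linearIsometry_apply_eq_neg {e : E} (he : ‖e‖ = 1) :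
    ∃ R : E →ₗᵢ[ℝ] E, R e = -e ∧ ∀ x, ‖R x - x‖ ≤ ‖e - -e‖ * ‖x‖ := by
  refine ⟨(LinearIsometryEquiv.neg ℝ).toLinearIsometry, rfl, fun x => ?_⟩
  have hx : -x - x = (-2 : ℝ) • x := by module
  have he2 : e - -e = (2 : ℝ) • e := by module
  simp only [LinearIsometryEquiv.coe_toLinearIsometry, LinearIsometryEquiv.coe_neg,
    hx, he2, norm_smul, he]
  norm_num

theorem exists_linearIsometry_apply_eq_of_norm_eq_one {e e' : E} (he : ‖e‖ = 1)
    (he' : ‖e'‖ = 1) : ∃ R : E →ₗᵢ[ℝ] E, R e = e' ∧ ∀ x, ‖R x - x‖ ≤ ‖e - e'‖ * ‖x‖ := by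
  set c := ⟪e, e'⟫
  set u := e' - c • e with hu_def
  have hee : ⟪e, e⟫ = 1 := by rw [real_inner_self_eq_norm_sq, he, one_pow]
  have heu : ⟪e, u⟫ = 0 := by
    rw [hu_def, inner_sub_right, real_inner_smul_right, hee, mul_one, sub_self]
  have hcu : c ^ 2 + ‖u‖ ^ 2 = 1 := by
    have h := norm_add_sq_real (c • e) u
    rw [add_sub_cancel, he', real_inner_smul_left, heu, norm_smul, he] at h
    simp only [mul_zero, mul_one, Real.norm_eq_abs, sq_abs] at h
    linarith
  by_cases hu : u = 0
  · rw [hu, norm_zero] at hcu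
    have hce : e' = c • e := sub_eq_zero.mp hu
    obtain hc | hc : c = 1 ∨ c = -1 := sq_eq_one_iff.mp (by linarith)
    · refine ⟨LinearIsometry.id, by simp [hce, hc], fun x => ?_⟩
      simp only [LinearIsometry.id_apply, sub_self, norm_zero]
      positivity
    · rw [hce, hc, neg_one_smul]
      exact exists_linearIsometry_apply_eq_neg he
  · set f := ‖u‖⁻¹ • u
    have hnu : ‖u‖ ≠ 0 := norm_ne_zero_iff.mpr hu
    have hf : ‖f‖ = 1 := by rw [norm_smul, norm_inv, norm_norm, inv_mul_cancel₀ hnu]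
    have hef : Orthonormal ℝ ![e, f] := by
      have hef0 : ⟪e, f⟫ = 0 := by rw [real_inner_smul_right, heu, mul_zero]
      rw [orthonormal_iff_ite]
      simp [Fin.forall_fin_two, he, hf, hef0, real_inner_comm e f]
    let R : E →ₗᵢ[ℝ] E := ⟨planeRotation e f c ‖u‖, norm_planeRotation hef hcu⟩
    have hRe : R e = e' := by
      change planeRotation e f c ‖u‖ e = e'
      rw [planeRotation_apply_left hef, smul_smul, mul_inv_cancel₀ hnu, one_smul, hu_def]
      abel
    refine ⟨R, hRe, fun x => ?_⟩
    rw [← hRe, norm_sub_rev e]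
    exact norm_planeRotation_sub_self_le hef hcu x

theorem exists_linearIsometry_apply_eq_of_norm_eq {v w : E} (hvw : ‖v‖ = ‖w‖) (hv : v ≠ 0) :
    ∃ R : E →ₗᵢ[ℝ] E, R v = w ∧ ∀ x, ‖R x - x‖ ≤ (‖v - w‖ / ‖v‖) * ‖x‖ := by
  have hnv : ‖v‖ ≠ 0 := norm_ne_zero_iff.mpr hv
  have hunit : ∀ y : E, ‖y‖ = ‖v‖ → ‖‖v‖⁻¹ • y‖ = 1 := fun y hy => by
    rw [norm_smul, norm_inv, norm_norm, hy, inv_mul_cancel₀ hnv]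
  obtain ⟨R, hRe, hR⟩ :=
    exists_linearIsometry_apply_eq_of_norm_eq_one (hunit v rfl) (hunit w hvw.symm)
  refine ⟨R, ?_, fun x => ?_⟩
  · simpa [hnv] using congrArg (‖v‖ • ·) hRe
  · simpa [← smul_sub, norm_smul, div_eq_inv_mul] using hR x

/-- Let `v, w ∈ ℝ^d` with `|v| = |w| ≠ 0`. Then there is a linear
isometry `R : ℝ^d → ℝ^d` with `Rv = w` and `|Rx − x| ≤ (|v−w|/|v|)|x|` for every `x`;
in particular, for every `r > 0`, `sup_{|x| ≤ r} |Rx − x| ≤ r |v−w|/|v|`. -/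
theorem stmt19 {d : ℕ} (v w : EuclideanSpace ℝ (Fin d))
    (hvw : ‖v‖ = ‖w‖) (hv : v ≠ 0) :
    ∃ R : EuclideanSpace ℝ (Fin d) →ₗᵢ[ℝ] EuclideanSpace ℝ (Fin d),
      R v = w ∧
      (∀ x, ‖R x - x‖ ≤ (‖v - w‖ / ‖v‖) * ‖x‖) ∧
      ∀ r > 0, ∀ x, ‖x‖ ≤ r → ‖R x - x‖ ≤ r * ‖v - w‖ / ‖v‖ := by
  obtain ⟨R, hRv, hR⟩ := exists_linearIsometry_apply_eq_of_norm_eq hvw hv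
  refine ⟨R, hRv, hR, fun r _ x hx => ?_⟩
  calc ‖R x - x‖ ≤ (‖v - w‖ / ‖v‖) * ‖x‖ := hR x
    _ ≤ (‖v - w‖ / ‖v‖) * r := by gcongr
    _ = r * ‖v - w‖ / ‖v‖ := by ring
end
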